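/- arXiv:2112.04105 — 3 statements merged into one kernel-verified Lean document; each statement's English description precedes it below -/
import Mathlib

section
/- For any 0 < λ₁ < λ₂, every λ₂-quasi-geometrically infinitely divisible distribution on [0,∞) is also λ₁-quasi-geometrically infinitely divisible; that is, the class G_{λ₂} is contained in G_{λ₁}. -/
open MeasureTheory Real Set

noncomputable section

/-- Convolution of two pmfs on ℕ. -/
def seqConv (f g : ℕ → ℝ) : ℕ → ℝ := fun n => ∑ k ∈ Finset.range (n + 1), f k * g (n - k)

/-- k-fold convolution power of a pmf on ℕ. -/
def seqConvPow (f : ℕ → ℝ) : ℕ → ℕ → ℝ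
  | 0 => fun n => if n = 0 then 1 else 0
  | k + 1 => seqConv f (seqConvPow f k)

/-- `f` is a probability mass function on ℕ. -/
def IsPMF (f : ℕ → ℝ) : Prop := (∀ n, 0 ≤ f n) ∧ ∑' n, f n = 1

/-- pmf of a geometric(p) random sum `X₁ + ⋯ + X_{N_p}` (N_p ≥ 1) of iid variables with pmf f. -/
def geomCompound (p : ℝ) (f : ℕ → ℝ) : ℕ → ℝ :=
  fun n => ∑' k : ℕ, p * (1 - p) ^ k * seqConvPow f (k + 1) n

/-- A distribution on ℕ is geometrically infinitely divisible. -/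
def GID (q : ℕ → ℝ) : Prop :=
  ∀ p ∈ Set.Ioo (0 : ℝ) 1, ∃ f : ℕ → ℝ, IsPMF f ∧ ∀ n, q n = geomCompound p f n

/-- Convolution of measures on ℝ (distribution of the sum of independent rv's). -/
def mconv (μ ν : Measure ℝ) : Measure ℝ :=
  Measure.map (fun x : ℝ × ℝ => x.1 + x.2) (μ.prod ν)

/-- k-fold convolution power of a measure on ℝ. -/
def mpow (μ : Measure ℝ) : ℕ → Measure ℝ
  | 0 => Measure.dirac 0
  | k + 1 => mconv μ (mpow μ k)

/-- A distribution on [0,∞) is geometrically infinitely divisible: for every p ∈ (0,1)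
it is the distribution of a geometric(p) random sum of iid nonnegative rv's. -/
def GIDM (μ : Measure ℝ) : Prop :=
  ∀ p ∈ Set.Ioo (0 : ℝ) 1, ∃ ν : Measure ℝ, IsProbabilityMeasure ν ∧ ν (Set.Iio 0) = 0 ∧
    μ = Measure.sum (fun k : ℕ => (ENNReal.ofReal (p * (1 - p) ^ k)) • mpow ν (k + 1))

/-- Laplace–Stieltjes transform of a measure on ℝ. -/
def lst (μ : Measure ℝ) (u : ℝ) : ℝ := ∫ x, Real.exp (-(u * x)) ∂μ

/-- pmf of the λ-Poisson mixture with mixing distribution μ. -/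
def pmix (l : ℝ) (μ : Measure ℝ) (n : ℕ) : ℝ :=
  ∫ x, (l * x) ^ n * Real.exp (-(l * x)) / (n.factorial : ℝ) ∂μ

/-- μ is λ-quasi-geometrically infinitely divisible: its λ-Poisson mixture is g.i.d. -/
def QGID (l : ℝ) (μ : Measure ℝ) : Prop := GID (pmix l μ)

/-- K(τ) = -φ'(τ)/φ(τ)² where φ is the LST of μ. -/
def Kfun (μ : Measure ℝ) (τ : ℝ) : ℝ := -(deriv (lst μ) τ) / (lst μ τ) ^ 2

/-- G is a probability generating function (on |z| ≤ 1). -/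
def IsPGF (G : ℝ → ℝ) : Prop :=
  ∃ f : ℕ → ℝ, IsPMF f ∧ ∀ z : ℝ, |z| ≤ 1 → G z = ∑' n, f n * z ^ n

end

/-!
Thinning a Poisson(`l₂ x`) count, keeping each point independently with probability `l₁ / l₂`,
gives a Poisson(`l₁ x`) count; mixing over `x ∼ μ`, the `l₁`-Poisson mixture of `μ` is the
binomial thinning of its `l₂`-Poisson mixture. By Vandermonde's identity thinning commutes with
convolution, hence with geometric random sums: thinning the geometric(`p`) sum of iid copies of
`f` gives the geometric(`p`) sum of iid copies of the thinned `f`. So a geometric decomposition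
of the `l₂`-mixture thins to one of the `l₁`-mixture. All series are handled in `ℝ≥0∞`, where
they can be rearranged freely.
-/

open scoped ENNReal Nat
open Finset

noncomputable section

def binomKernel (a : ℝ≥0∞) (N n : ℕ) : ℝ≥0∞ := N.choose n * a ^ n * (1 - a) ^ (N - n)

lemma binomKernel_eq_zero_of_lt {N n : ℕ} (h : N < n) (a : ℝ≥0∞) : binomKernel a N n = 0 := by
  simp [binomKernel, Nat.choose_eq_zero_of_lt h]

lemma binomKernel_zero_left (a : ℝ≥0∞) (n : ℕ) : binomKernel a 0 n = if n = 0 then 1 else 0 := by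
  rcases n with _ | n <;> simp [binomKernel]

lemma tsum_binomKernel {a : ℝ≥0∞} (ha : a ≤ 1) (N : ℕ) : ∑' n, binomKernel a N n = 1 := by
  rw [tsum_eq_sum (s := range (N + 1)) fun n hn =>
    binomKernel_eq_zero_of_lt (by simpa [Nat.lt_succ_iff] using hn) a]
  simpa [binomKernel, add_tsub_cancel_of_le ha, mul_comm, mul_left_comm, mul_assoc] using
    (add_pow a (1 - a) N).symm

lemma sum_antidiagonal_binomKernel (a : ℝ≥0∞) (A B n : ℕ) :
    ∑ kl ∈ antidiagonal n, binomKernel a A kl.1 * binomKernel a B kl.2 =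
      binomKernel a (A + B) n := by
  have term : ∀ kl ∈ antidiagonal n, binomKernel a A kl.1 * binomKernel a B kl.2 =
      ((A.choose kl.1 * B.choose kl.2 : ℕ) : ℝ≥0∞) * (a ^ n * (1 - a) ^ (A + B - n)) := by
    rintro ⟨k, l⟩ hkl
    rw [HasAntidiagonal.mem_antidiagonal] at hkl
    rcases lt_or_ge A k with hA | hA
    · simp [binomKernel, Nat.choose_eq_zero_of_lt hA]
    rcases lt_or_ge B l with hB | hB
    · simp [binomKernel, Nat.choose_eq_zero_of_lt hB]
    have hn : a ^ n = a ^ k * a ^ l := by rw [← pow_add, hkl]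
    have hm : (1 - a) ^ (A + B - n) = (1 - a) ^ (A - k) * (1 - a) ^ (B - l) := by
      rw [← pow_add]; congr 1; omega
    simp only [binomKernel, hn, hm]
    push_cast
    ring
  rw [sum_congr rfl term, ← sum_mul, ← Nat.cast_sum, ← Nat.add_choose_eq, binomKernel, mul_assoc]

lemma ENNReal.tsum_sum_antidiagonal (F : ℕ → ℕ → ℝ≥0∞) :
    ∑' n, ∑ kl ∈ antidiagonal n, F kl.1 kl.2 = ∑' A, ∑' B, F A B := by
  rw [← ENNReal.tsum_prod, ← HasAntidiagonal.sigmaAntidiagonalEquivProd.tsum_eq,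
    ENNReal.tsum_sigma']
  refine tsum_congr fun n => ?_
  rw [← Finset.tsum_subtype]
  rfl

def ennConv (u v : ℕ → ℝ≥0∞) (n : ℕ) : ℝ≥0∞ := ∑ kl ∈ antidiagonal n, u kl.1 * v kl.2

def ennConvPow (u : ℕ → ℝ≥0∞) : ℕ → ℕ → ℝ≥0∞
  | 0 => fun n => if n = 0 then 1 else 0
  | k + 1 => ennConv u (ennConvPow u k)

def ennGeomCompound (p : ℝ) (u : ℕ → ℝ≥0∞) (n : ℕ) : ℝ≥0∞ :=
  ∑' k, ENNReal.ofReal (p * (1 - p) ^ k) * ennConvPow u (k + 1) n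

def binomThin (a : ℝ≥0∞) (u : ℕ → ℝ≥0∞) (n : ℕ) : ℝ≥0∞ := ∑' N, binomKernel a N n * u N

lemma tsum_binomThin {a : ℝ≥0∞} (ha : a ≤ 1) (u : ℕ → ℝ≥0∞) :
    ∑' n, binomThin a u n = ∑' N, u N := by
  simp only [binomThin]
  rw [ENNReal.tsum_comm]
  simp [ENNReal.tsum_mul_right, tsum_binomKernel ha]

lemma binomThin_ennConv (a : ℝ≥0∞) (u v : ℕ → ℝ≥0∞) :
    binomThin a (ennConv u v) = ennConv (binomThin a u) (binomThin a v) := by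
  funext n
  calc binomThin a (ennConv u v) n
      = ∑' N, ∑ kl ∈ antidiagonal N, binomKernel a (kl.1 + kl.2) n * (u kl.1 * v kl.2) := by
        refine tsum_congr fun N => ?_
        rw [ennConv, mul_sum]
        refine sum_congr rfl fun kl hkl => ?_
        rw [HasAntidiagonal.mem_antidiagonal.1 hkl]
    _ = ∑' A, ∑' B, binomKernel a (A + B) n * (u A * v B) :=
        ENNReal.tsum_sum_antidiagonal fun A B => binomKernel a (A + B) n * (u A * v B)
    _ = ∑' A, ∑' B, ∑ kl ∈ antidiagonal n,
          binomKernel a A kl.1 * u A * (binomKernel a B kl.2 * v B) := by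
        simp_rw [← sum_antidiagonal_binomKernel, sum_mul]
        exact tsum_congr fun A => tsum_congr fun B => sum_congr rfl fun kl _ => by ring
    _ = ennConv (binomThin a u) (binomThin a v) n := by
        simp only [ennConv, binomThin, ← ENNReal.tsum_mul_right, ← ENNReal.tsum_mul_left]
        simp_rw [Summable.tsum_finsetSum fun _ _ => ENNReal.summable]
        exact sum_congr rfl fun _ _ => ENNReal.tsum_comm

lemma binomThin_ennConvPow (a : ℝ≥0∞) (u : ℕ → ℝ≥0∞) (k : ℕ) :
    binomThin a (ennConvPow u k) = ennConvPow (binomThin a u) k := by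
  induction k with
  | zero => funext n; simp [binomThin, ennConvPow, binomKernel_zero_left]
  | succ k ih => rw [ennConvPow, ennConvPow, binomThin_ennConv, ih]

lemma binomThin_ennGeomCompound (a : ℝ≥0∞) (p : ℝ) (u : ℕ → ℝ≥0∞) :
    binomThin a (ennGeomCompound p u) = ennGeomCompound p (binomThin a u) := by
  funext n
  simp only [ennGeomCompound, ← binomThin_ennConvPow, binomThin, ← ENNReal.tsum_mul_left]
  rw [ENNReal.tsum_comm]
  exact tsum_congr fun k => tsum_congr fun N => mul_left_comm _ _ _

lemma IsPMF.summable {f : ℕ → ℝ} (hf : IsPMF f) : Summable f := by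
  by_contra h
  simpa [tsum_eq_zero_of_not_summable h] using hf.2

lemma IsPMF.tsum_ofReal {f : ℕ → ℝ} (hf : IsPMF f) : ∑' n, ENNReal.ofReal (f n) = 1 := by
  rw [← ENNReal.ofReal_tsum_of_nonneg hf.1 hf.summable, hf.2, ENNReal.ofReal_one]

lemma isPMF_toReal {u : ℕ → ℝ≥0∞} (hu : ∑' n, u n = 1) : IsPMF fun n => (u n).toReal := by
  refine ⟨fun n => ENNReal.toReal_nonneg, ?_⟩
  rw [← ENNReal.tsum_toReal_eq (ENNReal.ne_top_of_tsum_ne_top (hu ▸ ENNReal.one_ne_top)), hu,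
    ENNReal.toReal_one]

lemma seqConvPow_nonneg {f : ℕ → ℝ} (hf : ∀ n, 0 ≤ f n) (k n : ℕ) : 0 ≤ seqConvPow f k n := by
  induction k generalizing n with
  | zero => unfold seqConvPow; split_ifs <;> norm_num
  | succ k ih => exact sum_nonneg (s := range (n + 1)) fun i _ => mul_nonneg (hf i) (ih (n - i))

lemma seqConvPow_le_one {f : ℕ → ℝ} (hf : IsPMF f) (k n : ℕ) : seqConvPow f k n ≤ 1 := by
  induction k generalizing n with
  | zero => unfold seqConvPow; split_ifs <;> norm_num
  | succ k ih =>
    calc seqConvPow f (k + 1) n = ∑ i ∈ range (n + 1), f i * seqConvPow f k (n - i) := rfl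
      _ ≤ ∑ i ∈ range (n + 1), f i := sum_le_sum fun i _ => mul_le_of_le_one_right (hf.1 i) (ih _)
      _ ≤ ∑' i, f i := hf.summable.sum_le_tsum _ fun i _ => hf.1 i
      _ = 1 := hf.2

lemma ofReal_seqConv {f g : ℕ → ℝ} (hf : ∀ n, 0 ≤ f n) (hg : ∀ n, 0 ≤ g n) (n : ℕ) :
    ENNReal.ofReal (seqConv f g n) =
      ennConv (fun n => ENNReal.ofReal (f n)) (fun n => ENNReal.ofReal (g n)) n := by
  rw [seqConv, ennConv, Nat.sum_antidiagonal_eq_sum_range_succ_mk,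
    ENNReal.ofReal_sum_of_nonneg fun i _ => mul_nonneg (hf i) (hg _)]
  exact sum_congr rfl fun i _ => ENNReal.ofReal_mul (hf i)

lemma ofReal_seqConvPow {f : ℕ → ℝ} (hf : ∀ n, 0 ≤ f n) (k n : ℕ) :
    ENNReal.ofReal (seqConvPow f k n) = ennConvPow (fun n => ENNReal.ofReal (f n)) k n := by
  induction k generalizing n with
  | zero => simp only [seqConvPow, ennConvPow]; split_ifs <;> simp
  | succ k ih =>
    rw [seqConvPow, ennConvPow, ofReal_seqConv hf (seqConvPow_nonneg hf k)]
    simp_rw [ih]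

lemma geomCompound_nonneg {f : ℕ → ℝ} (hf : ∀ n, 0 ≤ f n) {p : ℝ} (hp : p ∈ Ioo (0 : ℝ) 1)
    (n : ℕ) : 0 ≤ geomCompound p f n :=
  tsum_nonneg fun k =>
    mul_nonneg (mul_nonneg hp.1.le (pow_nonneg (by linarith [hp.2]) k)) (seqConvPow_nonneg hf _ n)

lemma ofReal_geomCompound {f : ℕ → ℝ} (hf : IsPMF f) {p : ℝ} (hp : p ∈ Ioo (0 : ℝ) 1) (n : ℕ) :
    ENNReal.ofReal (geomCompound p f n) =
      ennGeomCompound p (fun n => ENNReal.ofReal (f n)) n := by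
  have hw : ∀ k : ℕ, 0 ≤ p * (1 - p) ^ k := fun k =>
    mul_nonneg hp.1.le (pow_nonneg (by linarith [hp.2]) k)
  have hsum : Summable fun k => p * (1 - p) ^ k * seqConvPow f (k + 1) n :=
    Summable.of_nonneg_of_le (fun k => mul_nonneg (hw k) (seqConvPow_nonneg hf.1 _ n))
      (fun k => mul_le_of_le_one_right (hw k) (seqConvPow_le_one hf _ n))
      ((summable_geometric_of_lt_one (by linarith [hp.2]) (by linarith [hp.1])).mul_left p)
  rw [geomCompound, ENNReal.ofReal_tsum_of_nonneg
    (fun k => mul_nonneg (hw k) (seqConvPow_nonneg hf.1 _ n)) hsum]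
  exact tsum_congr fun k => by rw [ENNReal.ofReal_mul (hw k), ofReal_seqConvPow hf.1]

theorem GID.of_ofReal_eq_binomThin {q r : ℕ → ℝ} {a : ℝ≥0∞} (ha : a ≤ 1) (hq : ∀ n, 0 ≤ q n)
    (hqr : ∀ n, ENNReal.ofReal (q n) = binomThin a (fun N => ENNReal.ofReal (r N)) n)
    (hr : GID r) : GID q := by
  intro p hp
  obtain ⟨f, hf, hrf⟩ := hr p hp
  set u := binomThin a fun N => ENNReal.ofReal (f N)
  have hu : ∑' n, u n = 1 := by rw [tsum_binomThin ha, hf.tsum_ofReal]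
  have hg := isPMF_toReal hu
  refine ⟨_, hg, fun n =>
    (ENNReal.ofReal_eq_ofReal_iff (hq n) (geomCompound_nonneg hg.1 hp n)).1 ?_⟩
  have hu_toReal : (fun n => ENNReal.ofReal (u n).toReal) = u := funext fun n =>
    ENNReal.ofReal_toReal (ENNReal.ne_top_of_tsum_ne_top (hu ▸ ENNReal.one_ne_top) n)
  rw [hqr, ofReal_geomCompound hg hp, hu_toReal, ← binomThin_ennGeomCompound]
  simp_rw [hrf, ofReal_geomCompound hf hp]

def poissonWeight (m : ℝ) (n : ℕ) : ℝ := m ^ n * exp (-m) / n !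

lemma poissonWeight_nonneg {m : ℝ} (hm : 0 ≤ m) (n : ℕ) : 0 ≤ poissonWeight m n := by
  unfold poissonWeight; positivity

lemma poissonWeight_le_one {m : ℝ} (hm : 0 ≤ m) (n : ℕ) : poissonWeight m n ≤ 1 := by
  rw [poissonWeight, mul_div_right_comm, exp_neg, ← div_eq_mul_inv, div_le_one (exp_pos m)]
  exact pow_div_factorial_le_exp _ hm n

lemma hasSum_choose_mul_poissonWeight (a m : ℝ) (n : ℕ) :
    HasSum (fun N => N.choose n * a ^ n * (1 - a) ^ (N - n) * poissonWeight m N)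
      (poissonWeight (a * m) n) := by
  rw [← hasSum_nat_add_iff' n, sum_eq_zero fun N hN => by
    simp [Nat.choose_eq_zero_of_lt (mem_range.1 hN)], sub_zero]
  have term : ∀ j, (j + n).choose n * a ^ n * (1 - a) ^ (j + n - n) * poissonWeight m (j + n) =
      (a * m) ^ n * exp (-m) / n ! * (((1 - a) * m) ^ j / j !) := by
    intro j
    have hfac : ((j + n)! : ℝ) = (j + n).choose n * j ! * n ! := by
      exact_mod_cast (Nat.add_choose_mul_factorial_mul_factorial j n).symm
    have hchoose : ((j + n).choose n : ℝ) ≠ 0 :=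
      Nat.cast_ne_zero.2 (Nat.choose_pos (Nat.le_add_left n j)).ne'
    rw [poissonWeight, hfac, Nat.add_sub_cancel, mul_pow, mul_pow, pow_add]
    field_simp
  have hexp : exp (-(a * m)) = exp (-m) * exp ((1 - a) * m) := by
    rw [← exp_add]
    ring_nf
  have hseries : HasSum (fun j => ((1 - a) * m) ^ j / j !) (exp ((1 - a) * m)) := by
    rw [exp_eq_exp_ℝ]
    exact NormedSpace.expSeries_div_hasSum_exp _
  have hlimit : poissonWeight (a * m) n = (a * m) ^ n * exp (-m) / n ! * exp ((1 - a) * m) := by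
    rw [poissonWeight, hexp]
    ring
  rw [funext term, hlimit]
  exact hseries.mul_left _

lemma binomKernel_ofReal {a : ℝ} (ha0 : 0 ≤ a) (ha1 : a ≤ 1) (N n : ℕ) :
    binomKernel (ENNReal.ofReal a) N n =
      ENNReal.ofReal (N.choose n * a ^ n * (1 - a) ^ (N - n)) := by
  have : 0 ≤ 1 - a := by linarith
  rw [binomKernel, ENNReal.ofReal_mul (by positivity), ENNReal.ofReal_mul (by positivity),
    ENNReal.ofReal_pow this, ENNReal.ofReal_pow ha0, ENNReal.ofReal_sub _ ha0, ENNReal.ofReal_one,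
    ENNReal.ofReal_natCast]

lemma tsum_binomKernel_mul_poissonWeight {a m : ℝ} (ha0 : 0 ≤ a) (ha1 : a ≤ 1) (hm : 0 ≤ m)
    (n : ℕ) :
    ∑' N, binomKernel (ENNReal.ofReal a) N n * ENNReal.ofReal (poissonWeight m N) =
      ENNReal.ofReal (poissonWeight (a * m) n) := by
  have : 0 ≤ 1 - a := by linarith
  have hnonneg : ∀ N, 0 ≤ N.choose n * a ^ n * (1 - a) ^ (N - n) := fun N => by positivity
  simp_rw [binomKernel_ofReal ha0 ha1, ← ENNReal.ofReal_mul (hnonneg _)]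
  have hsum := hasSum_choose_mul_poissonWeight a m n
  rw [← ENNReal.ofReal_tsum_of_nonneg
    (fun N => mul_nonneg (hnonneg N) (poissonWeight_nonneg hm N)) hsum.summable, hsum.tsum_eq]

section PoissonMixture

variable {μ : Measure ℝ} (h0 : ∀ᵐ x ∂μ, 0 ≤ x)
include h0

lemma pmix_nonneg {l : ℝ} (hl : 0 ≤ l) (n : ℕ) : 0 ≤ pmix l μ n :=
  integral_nonneg_of_ae (h0.mono fun _ hx => poissonWeight_nonneg (mul_nonneg hl hx) n)

lemma ofReal_pmix [IsFiniteMeasure μ] {l : ℝ} (hl : 0 ≤ l) (n : ℕ) :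
    ENNReal.ofReal (pmix l μ n) = ∫⁻ x, ENNReal.ofReal (poissonWeight (l * x) n) ∂μ := by
  have hcont : Continuous fun x => poissonWeight (l * x) n := by unfold poissonWeight; fun_prop
  have hint : Integrable (fun x => poissonWeight (l * x) n) μ := by
    refine (integrable_const 1).mono' hcont.aestronglyMeasurable (h0.mono fun x hx => ?_)
    rw [norm_of_nonneg (poissonWeight_nonneg (mul_nonneg hl hx) n)]
    exact poissonWeight_le_one (mul_nonneg hl hx) n
  exact ofReal_integral_eq_lintegral_ofReal hint
    (h0.mono fun x hx => poissonWeight_nonneg (mul_nonneg hl hx) n)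

lemma ofReal_pmix_eq_binomThin [IsFiniteMeasure μ] {l₁ l₂ : ℝ} (hl₁ : 0 ≤ l₁) (hl : l₁ ≤ l₂)
    (hl₂ : 0 < l₂) (n : ℕ) :
    ENNReal.ofReal (pmix l₁ μ n) =
      binomThin (ENNReal.ofReal (l₁ / l₂)) (fun N => ENNReal.ofReal (pmix l₂ μ N)) n := by
  have hmeas : ∀ N, Measurable fun x => ENNReal.ofReal (poissonWeight (l₂ * x) N) := fun N => by
    unfold poissonWeight; fun_prop
  simp_rw [binomThin, ofReal_pmix h0 hl₂.le, ← lintegral_const_mul _ (hmeas _)]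
  rw [← lintegral_tsum fun N => ((hmeas N).const_mul _).aemeasurable, ofReal_pmix h0 hl₁]
  refine lintegral_congr_ae (h0.mono fun x hx => ?_)
  dsimp only
  rw [tsum_binomKernel_mul_poissonWeight (div_nonneg hl₁ hl₂.le) ((div_le_one hl₂).2 hl)
    (mul_nonneg hl₂.le hx), ← mul_assoc, div_mul_cancel₀ _ hl₂.ne']

end PoissonMixture

end

/-- For 0 < λ₁ < λ₂, every λ₂-q.g.i.d. distribution on [0,∞)
is λ₁-q.g.i.d. -/
theorem stmt5 (μ : Measure ℝ) [IsProbabilityMeasure μ] (hsupp : μ (Set.Iio 0) = 0)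
    (l₁ l₂ : ℝ) (h₁ : 0 < l₁) (h₂ : l₁ < l₂) :
    QGID l₂ μ → QGID l₁ μ := by
  have hl₂ : 0 < l₂ := h₁.trans h₂
  have h0 : ∀ᵐ x ∂μ, 0 ≤ x := ae_iff.2 (by simp only [not_le]; exact hsupp)
  exact GID.of_ofReal_eq_binomThin (ENNReal.ofReal_le_one.2 ((div_le_one hl₂).2 h₂.le))
    (pmix_nonneg h0 h₁.le) (ofReal_pmix_eq_binomThin h0 h₁.le h₂.le hl₂)
end

section
/- Fix λ > 0. A distribution on [0,∞) with Laplace–Stieltjes transform φ is geometrically infinitely divisible if and only if for every p ∈ (0,1), the function G(z; λ, p) = φ(λ(1-z))/(p + (1-p)φ(λ(1-z))) is the pgf of a λ-Poisson mixture; in that case the mixing distribution is itself g.i.d. with LST φ_p(τ) = φ(τ)/(p + (1-p)φ(τ)). -/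
open MeasureTheory Real Set

open MeasureTheory Real Set

namespace Stmt8Aux

lemma ae_nonneg {ρ : Measure ℝ} (h : ρ (Set.Iio 0) = 0) : ∀ᵐ x ∂ρ, 0 ≤ x := by
  rw [ae_iff]
  convert h using 2
  ext x; simp [Set.mem_Iio, not_le]

lemma lst_integrable {ρ : Measure ℝ} [IsProbabilityMeasure ρ] (h : ρ (Set.Iio 0) = 0)
    {τ : ℝ} (hτ : 0 ≤ τ) : Integrable (fun x => Real.exp (-(τ * x))) ρ := by
  refine Integrable.mono' (integrable_const 1) ?_ ?_
  · exact (Continuous.aestronglyMeasurable (by fun_prop : Continuous fun x : ℝ => Real.exp (-(τ * x))))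
  · filter_upwards [ae_nonneg h] with x hx
    rw [Real.norm_eq_abs, abs_of_pos (Real.exp_pos _)]
    exact Real.exp_le_one_iff.mpr (by nlinarith)

lemma lst_pos {ρ : Measure ℝ} [IsProbabilityMeasure ρ] (h : ρ (Set.Iio 0) = 0)
    {τ : ℝ} (hτ : 0 ≤ τ) : 0 < lst ρ τ := by
  rw [lst, integral_pos_iff_support_of_nonneg (fun x => (Real.exp_pos _).le)
    (lst_integrable h hτ)]
  have : Function.support (fun x : ℝ => Real.exp (-(τ * x))) = Set.univ := by
    ext x; simp [Function.mem_support, (Real.exp_pos _).ne']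
  rw [this]
  simp [measure_univ]

lemma lst_le_one {ρ : Measure ℝ} [IsProbabilityMeasure ρ] (h : ρ (Set.Iio 0) = 0)
    {τ : ℝ} (hτ : 0 ≤ τ) : lst ρ τ ≤ 1 := by
  have : lst ρ τ ≤ ∫ _x, (1:ℝ) ∂ρ := by
    refine integral_mono_ae (lst_integrable h hτ) (integrable_const 1) ?_
    filter_upwards [ae_nonneg h] with x hx
    exact Real.exp_le_one_iff.mpr (by nlinarith)
  simpa using this

lemma lst_zero (ρ : Measure ℝ) [IsProbabilityMeasure ρ] : lst ρ 0 = 1 := by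
  simp [lst]

end Stmt8Aux
namespace Stmt8Aux

instance mconv_prob (ρ σ : Measure ℝ) [IsProbabilityMeasure ρ] [IsProbabilityMeasure σ] :
    IsProbabilityMeasure (mconv ρ σ) := by
  unfold mconv
  exact Measure.isProbabilityMeasure_map (measurable_fst.add measurable_snd).aemeasurable

lemma mconv_supp {ρ σ : Measure ℝ} [IsProbabilityMeasure ρ] [IsProbabilityMeasure σ]
    (hρ : ρ (Set.Iio 0) = 0) (hσ : σ (Set.Iio 0) = 0) : mconv ρ σ (Set.Iio 0) = 0 := by
  unfold mconv
  rw [Measure.map_apply (by fun_prop : Measurable fun x : ℝ × ℝ => x.1 + x.2) measurableSet_Iio]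
  have hsub : (fun x : ℝ × ℝ => x.1 + x.2) ⁻¹' (Set.Iio 0) ⊆
      (Set.Iio 0 ×ˢ Set.univ) ∪ (Set.univ ×ˢ Set.Iio 0) := by
    rintro ⟨x, y⟩ hxy
    simp only [Set.mem_preimage, Set.mem_Iio] at hxy
    by_contra hc
    simp only [Set.mem_union, Set.mem_prod, Set.mem_Iio, Set.mem_univ, and_true, true_and,
      not_or, not_lt] at hc
    linarith [hc.1, hc.2]
  refine le_antisymm (le_trans (measure_mono hsub) ?_) zero_le
  refine le_trans (measure_union_le _ _) ?_
  rw [Measure.prod_prod, Measure.prod_prod, hρ, hσ]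
  simp

instance mpow_prob (ρ : Measure ℝ) [IsProbabilityMeasure ρ] (k : ℕ) :
    IsProbabilityMeasure (mpow ρ k) := by
  induction k with
  | zero => rw [mpow]; infer_instance
  | succ n ih => rw [mpow]; exact mconv_prob ρ (mpow ρ n)

lemma mpow_supp {ρ : Measure ℝ} [IsProbabilityMeasure ρ] (hρ : ρ (Set.Iio 0) = 0) (k : ℕ) :
    mpow ρ k (Set.Iio 0) = 0 := by
  induction k with
  | zero => rw [mpow]; simp
  | succ n ih => rw [mpow]; exact mconv_supp hρ ih

lemma lst_mconv (ρ σ : Measure ℝ) [IsProbabilityMeasure ρ] [IsProbabilityMeasure σ] (τ : ℝ) :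
    lst (mconv ρ σ) τ = lst ρ τ * lst σ τ := by
  unfold lst mconv
  rw [integral_map (by fun_prop : Measurable fun x : ℝ × ℝ => x.1 + x.2).aemeasurable
    (Continuous.aestronglyMeasurable (by fun_prop : Continuous fun x : ℝ => Real.exp (-(τ * x))))]
  have : ∀ x : ℝ × ℝ, Real.exp (-(τ * (x.1 + x.2)))
      = Real.exp (-(τ * x.1)) * Real.exp (-(τ * x.2)) := by
    intro x; rw [← Real.exp_add]; ring_nf
  simp_rw [this]
  exact integral_prod_mul (fun x => Real.exp (-(τ * x))) (fun y => Real.exp (-(τ * y)))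

lemma lst_mpow (ρ : Measure ℝ) [IsProbabilityMeasure ρ] (k : ℕ) (τ : ℝ) :
    lst (mpow ρ k) τ = (lst ρ τ) ^ k := by
  induction k with
  | zero => rw [mpow, pow_zero, lst, integral_dirac]; simp
  | succ n ih => rw [mpow, lst_mconv, ih, pow_succ]; ring

end Stmt8Aux
namespace Stmt8Aux

/-- The geometric(p) compound measure. -/
noncomputable def cmpd (p : ℝ) (ν : Measure ℝ) : Measure ℝ :=
  Measure.sum (fun k : ℕ => (ENNReal.ofReal (p * (1 - p) ^ k)) • mpow ν (k + 1))

lemma cmpd_prob {p : ℝ} (hp : p ∈ Set.Ioo (0:ℝ) 1) (ν : Measure ℝ) [IsProbabilityMeasure ν] :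
    IsProbabilityMeasure (cmpd p ν) := by
  obtain ⟨hp0, hp1⟩ := hp
  constructor
  rw [cmpd, Measure.sum_apply _ MeasurableSet.univ]
  simp only [Measure.smul_apply, smul_eq_mul, measure_univ, mul_one]
  have hsummable : Summable (fun k : ℕ => p * (1 - p) ^ k) :=
    (summable_geometric_of_lt_one (by linarith) (by linarith)).mul_left p
  rw [← ENNReal.ofReal_tsum_of_nonneg (fun k => mul_nonneg hp0.le (pow_nonneg (by linarith) k)) hsummable]
  rw [tsum_mul_left, tsum_geometric_of_lt_one (by linarith) (by linarith)]
  rw [show (1 : ℝ) - (1 - p) = p by ring]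
  rw [mul_inv_cancel₀ hp0.ne']
  simp

lemma cmpd_supp {p : ℝ} {ν : Measure ℝ} [IsProbabilityMeasure ν]
    (hν : ν (Set.Iio 0) = 0) : cmpd p ν (Set.Iio 0) = 0 := by
  rw [cmpd, Measure.sum_apply _ measurableSet_Iio]
  simp [Measure.smul_apply, mpow_supp hν]

lemma lst_cmpd {p : ℝ} (hp : p ∈ Set.Ioo (0:ℝ) 1) {ν : Measure ℝ} [IsProbabilityMeasure ν]
    (hν : ν (Set.Iio 0) = 0) {τ : ℝ} (hτ : 0 ≤ τ) :
    lst (cmpd p ν) τ = p * lst ν τ / (1 - (1 - p) * lst ν τ) := by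
  obtain ⟨hp0, hp1⟩ := hp
  have hprob : IsProbabilityMeasure (cmpd p ν) := cmpd_prob ⟨hp0, hp1⟩ ν
  have hint : Integrable (fun x => Real.exp (-(τ * x))) (cmpd p ν) :=
    lst_integrable (cmpd_supp hν) hτ
  have hL0 : 0 < lst ν τ := lst_pos hν hτ
  have hL1 : lst ν τ ≤ 1 := lst_le_one hν hτ
  have h1 : lst (cmpd p ν) τ = ∑' k : ℕ, (p * (1 - p) ^ k) * (lst ν τ) ^ (k + 1) := by
    rw [lst, cmpd, integral_sum_measure (by rwa [cmpd] at hint)]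
    congr 1
    ext k
    rw [integral_smul_measure, ENNReal.toReal_ofReal (mul_nonneg hp0.le (pow_nonneg (by linarith) k)), ← lst_mpow, lst]
    simp
  rw [h1]
  have hterm : ∀ k : ℕ, (p * (1 - p) ^ k) * (lst ν τ) ^ (k + 1)
      = (p * lst ν τ) * ((1 - p) * lst ν τ) ^ k := by
    intro k; rw [pow_succ, mul_pow]; ring
  simp_rw [hterm]
  rw [tsum_mul_left, tsum_geometric_of_lt_one (mul_nonneg (by linarith) hL0.le) (by nlinarith)]
  rw [div_eq_mul_inv]

end Stmt8Aux
namespace Stmt8Aux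

lemma alg_forward {p L : ℝ} (hp0 : 0 < p) (hp1 : p < 1) (hL0 : 0 < L) (hL1 : L ≤ 1) :
    (p * L / (1 - (1 - p) * L)) / (p + (1 - p) * (p * L / (1 - (1 - p) * L))) = L := by
  have hD : 0 < 1 - (1 - p) * L := by nlinarith
  have h2 : p + (1 - p) * (p * L / (1 - (1 - p) * L)) = p / (1 - (1 - p) * L) := by
    field_simp; ring
  rw [h2]
  field_simp
  exact div_self (by nlinarith : (0:ℝ) < 1 - L * (1 - p)).ne'

lemma alg_backward {p M : ℝ} (hp0 : 0 < p) (hp1 : p < 1) (hM0 : 0 < M) (hM1 : M ≤ 1) :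
    p * (M / (p + (1 - p) * M)) / (1 - (1 - p) * (M / (p + (1 - p) * M))) = M := by
  have hD : 0 < p + (1 - p) * M := by nlinarith
  have h2 : 1 - (1 - p) * (M / (p + (1 - p) * M)) = p / (p + (1 - p) * M) := by
    field_simp
    ring
  rw [h2]
  field_simp
  exact div_self (by nlinarith : (0:ℝ) < p + M * (1 - p)).ne'

end Stmt8Aux
namespace Stmt8Aux

lemma ae_mem_Icc {ρ : Measure ℝ} (h : ρ (Set.Icc (0:ℝ) 1)ᶜ = 0) :
    ∀ᵐ x ∂ρ, x ∈ Set.Icc (0:ℝ) 1 := by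
  rw [ae_iff]
  convert h using 2
  ext x; simp

lemma integrable_of_continuous {ρ : Measure ℝ} [IsFiniteMeasure ρ]
    (h : ρ (Set.Icc (0:ℝ) 1)ᶜ = 0) {g : ℝ → ℝ} (hg : Continuous g) : Integrable g ρ := by
  set gK : C(Set.Icc (0:ℝ) 1, ℝ) := ⟨fun x => g x, hg.comp continuous_subtype_val⟩
  refine Integrable.mono' (integrable_const ‖gK‖) hg.aestronglyMeasurable ?_
  filter_upwards [ae_mem_Icc h] with x hx
  exact ContinuousMap.norm_coe_le_norm gK ⟨x, hx⟩

lemma exists_poly_near {g : ℝ → ℝ} (hg : Continuous g) {ε : ℝ} (hε : 0 < ε) :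
    ∃ P : Polynomial ℝ, ∀ x ∈ Set.Icc (0:ℝ) 1, |g x - P.eval x| ≤ ε := by
  set gK : C(Set.Icc (0:ℝ) 1, ℝ) := ⟨fun x => g x, hg.comp continuous_subtype_val⟩
  have hmem : gK ∈ closure ((polynomialFunctions (Set.Icc (0:ℝ) 1)) : Set C(Set.Icc (0:ℝ) 1, ℝ)) := by
    rw [← Subalgebra.topologicalClosure_coe, polynomialFunctions_closure_eq_top 0 1]
    trivial
  rw [Metric.mem_closure_iff] at hmem
  obtain ⟨h, hhS, hdist⟩ := hmem ε hε
  rw [polynomialFunctions_coe] at hhS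
  obtain ⟨P, rfl⟩ := hhS
  refine ⟨P, fun x hx => ?_⟩
  have := ContinuousMap.dist_apply_le_dist (f := gK)
    (g := Polynomial.toContinuousMapOnAlgHom (Set.Icc (0:ℝ) 1) P) ⟨x, hx⟩
  rw [Real.dist_eq] at this
  have h2 : (Polynomial.toContinuousMapOnAlgHom (Set.Icc (0:ℝ) 1) P) ⟨x, hx⟩ = P.eval x := rfl
  rw [h2] at this
  exact le_trans this hdist.le

lemma integral_poly_eq {μ ν : Measure ℝ} [IsFiniteMeasure μ] [IsFiniteMeasure ν]
    (hμ : μ (Set.Icc (0:ℝ) 1)ᶜ = 0) (hν : ν (Set.Icc (0:ℝ) 1)ᶜ = 0)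
    (h : ∀ n : ℕ, ∫ x, x ^ n ∂μ = ∫ x, x ^ n ∂ν) (P : Polynomial ℝ) :
    ∫ x, P.eval x ∂μ = ∫ x, P.eval x ∂ν := by
  have hev : ∀ x : ℝ, P.eval x = ∑ k ∈ Finset.range (P.natDegree + 1), P.coeff k * x ^ k := by
    intro x; exact Polynomial.eval_eq_sum_range (p := P) x
  simp_rw [hev]
  rw [integral_finset_sum _ (fun k _ => (integrable_of_continuous hμ (g := fun x => P.coeff k * x ^ k)
        (continuous_const.mul (continuous_pow k)))),
    integral_finset_sum _ (fun k _ => (integrable_of_continuous hν (g := fun x => P.coeff k * x ^ k)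
        (continuous_const.mul (continuous_pow k))))]
  refine Finset.sum_congr rfl fun k _ => ?_
  rw [integral_const_mul, integral_const_mul, h k]

lemma ext_of_moments {μ ν : Measure ℝ} [IsFiniteMeasure μ] [IsFiniteMeasure ν]
    (hμ : μ (Set.Icc (0:ℝ) 1)ᶜ = 0) (hν : ν (Set.Icc (0:ℝ) 1)ᶜ = 0)
    (h : ∀ n : ℕ, ∫ x, x ^ n ∂μ = ∫ x, x ^ n ∂ν) : μ = ν := by
  have key : ∀ g : ℝ → ℝ, Continuous g → ∫ x, g x ∂μ = ∫ x, g x ∂ν := by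
    intro g hg
    set C : ℝ := (μ Set.univ).toReal + (ν Set.univ).toReal with hC
    have hC0 : 0 ≤ C := by positivity
    have hbound : ∀ ε : ℝ, 0 < ε → |∫ x, g x ∂μ - ∫ x, g x ∂ν| ≤ ε * C := by
      intro ε hε
      obtain ⟨P, hP⟩ := exists_poly_near hg hε
      have hIμ : ‖∫ x, (g x - P.eval x) ∂μ‖ ≤ ε * (μ Set.univ).toReal := by
        refine norm_integral_le_of_norm_le_const ?_
        filter_upwards [ae_mem_Icc hμ] with x hx
        rw [Real.norm_eq_abs]; exact hP x hx
      have hIν : ‖∫ x, (g x - P.eval x) ∂ν‖ ≤ ε * (ν Set.univ).toReal := by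
        refine norm_integral_le_of_norm_le_const ?_
        filter_upwards [ae_mem_Icc hν] with x hx
        rw [Real.norm_eq_abs]; exact hP x hx
      have hgμ : Integrable g μ := integrable_of_continuous hμ hg
      have hgν : Integrable g ν := integrable_of_continuous hν hg
      have hPμ : Integrable (fun x => P.eval x) μ :=
        integrable_of_continuous hμ P.continuous_aeval
      have hPν : Integrable (fun x => P.eval x) ν :=
        integrable_of_continuous hν P.continuous_aeval
      have e1 : ∫ x, (g x - P.eval x) ∂μ = ∫ x, g x ∂μ - ∫ x, P.eval x ∂μ :=
        integral_sub hgμ hPμ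
      have e2 : ∫ x, (g x - P.eval x) ∂ν = ∫ x, g x ∂ν - ∫ x, P.eval x ∂ν :=
        integral_sub hgν hPν
      have e3 := integral_poly_eq hμ hν h P
      rw [e1] at hIμ; rw [e2] at hIν
      rw [Real.norm_eq_abs] at hIμ hIν
      have hsplit : (∫ x, g x ∂μ) - ∫ x, g x ∂ν =
          ((∫ x, g x ∂μ) - ∫ x, P.eval x ∂μ) + ((∫ x, P.eval x ∂ν) - ∫ x, g x ∂ν) := by
        rw [e3]; ring
      calc |(∫ x, g x ∂μ) - ∫ x, g x ∂ν|
          ≤ |(∫ x, g x ∂μ) - ∫ x, P.eval x ∂μ| + |(∫ x, P.eval x ∂ν) - ∫ x, g x ∂ν| := by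
            rw [hsplit]; exact abs_add_le _ _
        _ = |(∫ x, g x ∂μ) - ∫ x, P.eval x ∂μ| + |(∫ x, g x ∂ν) - ∫ x, P.eval x ∂ν| := by
            rw [abs_sub_comm (∫ x, P.eval x ∂ν)]
        _ ≤ ε * (μ Set.univ).toReal + ε * (ν Set.univ).toReal := add_le_add hIμ hIν
        _ = ε * C := by rw [hC]; ring
    by_contra hne
    have habs : 0 < |∫ x, g x ∂μ - ∫ x, g x ∂ν| := by
      rw [abs_pos]; exact sub_ne_zero_of_ne hne
    have hb := hbound (|(∫ x, g x ∂μ) - ∫ x, g x ∂ν| / (2 * (C + 1))) (by positivity)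
    rw [div_mul_eq_mul_div, le_div_iff₀ (by positivity)] at hb
    nlinarith
  refine ext_of_forall_lintegral_eq_of_IsFiniteMeasure (fun f => ?_)
  have hfc : Continuous fun x : ℝ => ((f x : NNReal) : ℝ) :=
    NNReal.continuous_coe.comp f.continuous
  rw [show (fun x : ℝ => ((f x : NNReal) : ENNReal)) = fun x => ((f x : NNReal) : ENNReal) from rfl]
  rw [lintegral_coe_eq_integral _ (integrable_of_continuous hμ hfc),
    lintegral_coe_eq_integral _ (integrable_of_continuous hν hfc),
    key _ hfc]

end Stmt8Aux
namespace Stmt8Aux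

lemma lst_inj {μ ν : Measure ℝ} [IsProbabilityMeasure μ] [IsProbabilityMeasure ν]
    (hμ : μ (Set.Iio 0) = 0) (hν : ν (Set.Iio 0) = 0)
    (h : ∀ τ : ℝ, 0 ≤ τ → lst μ τ = lst ν τ) : μ = ν := by
  set g : ℝ → ℝ := fun x => Real.exp (-x) with hg
  have hg_cont : Continuous g := Real.continuous_exp.comp continuous_neg
  have hg_inj : Function.Injective g :=
    Real.exp_injective.comp neg_injective
  have hemb : MeasurableEmbedding g := hg_cont.measurableEmbedding hg_inj
  have hsupp : ∀ (ρ : Measure ℝ), ρ (Set.Iio 0) = 0 →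
      Measure.map g ρ (Set.Icc (0:ℝ) 1)ᶜ = 0 := by
    intro ρ hρ
    rw [Measure.map_apply hg_cont.measurable measurableSet_Icc.compl]
    refine le_antisymm (le_trans (measure_mono ?_) hρ.le) zero_le
    intro x hx
    simp only [Set.mem_preimage, Set.mem_compl_iff, Set.mem_Icc, not_and_or, not_le] at hx
    simp only [Set.mem_Iio]
    by_contra hc
    push_neg at hc
    rcases hx with hx | hx
    · exact absurd (Real.exp_pos (-x)).le (not_le.mpr hx)
    · have : Real.exp (-x) ≤ 1 := Real.exp_le_one_iff.mpr (by linarith)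
      exact absurd this (not_le.mpr hx)
  have hmom : ∀ n : ℕ, ∫ t, t ^ n ∂(Measure.map g μ) = ∫ t, t ^ n ∂(Measure.map g ν) := by
    intro n
    have hmap : ∀ ρ : Measure ℝ, ∫ t, t ^ n ∂(Measure.map g ρ) = lst ρ (n : ℝ) := by
      intro ρ
      rw [integral_map hg_cont.measurable.aemeasurable (continuous_pow n).aestronglyMeasurable]
      unfold lst
      congr 1
      ext x
      rw [hg]
      simp only
      rw [← Real.exp_nat_mul]
      ring_nf
    rw [hmap, hmap, h _ (Nat.cast_nonneg n)]
  have hμm : IsProbabilityMeasure (Measure.map g μ) :=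
    Measure.isProbabilityMeasure_map hg_cont.measurable.aemeasurable
  have hνm : IsProbabilityMeasure (Measure.map g ν) :=
    Measure.isProbabilityMeasure_map hg_cont.measurable.aemeasurable
  have hmeq : Measure.map g μ = Measure.map g ν :=
    ext_of_moments (hsupp μ hμ) (hsupp ν hν) hmom
  ext s hs
  have h1 : μ s = Measure.map g μ (g '' s) := by
    rw [Measure.map_apply hg_cont.measurable (hemb.measurableSet_image.2 hs),
      Function.Injective.preimage_image hg_inj]
  have h2 : ν s = Measure.map g ν (g '' s) := by
    rw [Measure.map_apply hg_cont.measurable (hemb.measurableSet_image.2 hs),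
      Function.Injective.preimage_image hg_inj]
  rw [h1, h2, hmeq]

end Stmt8Aux
namespace Stmt8Aux

open scoped Topology

/-- Complex Laplace transform. -/
noncomputable def clst (ρ : Measure ℝ) (s : ℂ) : ℂ := ∫ x, Complex.exp (-(s * x)) ∂ρ

lemma clst_real (ρ : Measure ℝ) (τ : ℝ) : clst ρ (τ : ℂ) = ((lst ρ τ : ℝ) : ℂ) := by
  unfold clst lst
  have hx : ∀ x : ℝ, Complex.exp (-((τ:ℂ) * x)) = ((Real.exp (-(τ * x)) : ℝ) : ℂ) := by
    intro x; rw [Complex.ofReal_exp]; norm_cast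
  simp_rw [hx]
  exact integral_ofReal

lemma cexp_cont (s : ℂ) : Continuous fun x : ℝ => Complex.exp (-(s * x)) :=
  Complex.continuous_exp.comp ((continuous_const.mul Complex.continuous_ofReal).neg)

lemma norm_cexp (s : ℂ) (x : ℝ) : ‖Complex.exp (-(s * x))‖ = Real.exp (-(s.re * x)) := by
  rw [Complex.norm_exp]
  congr 1
  simp [Complex.mul_re]

lemma clst_hasDerivAt {ρ : Measure ℝ} [IsProbabilityMeasure ρ] (hρ : ρ (Set.Iio 0) = 0)
    {s₀ : ℂ} (hs₀ : 0 < s₀.re) :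
    HasDerivAt (clst ρ) (∫ x, -(x : ℂ) * Complex.exp (-(s₀ * x)) ∂ρ) s₀ := by
  set ε := s₀.re / 2 with hε
  have hε0 : 0 < ε := by positivity
  have key := hasDerivAt_integral_of_dominated_loc_of_deriv_le (μ := ρ)
    (F := fun (s : ℂ) (x : ℝ) => Complex.exp (-(s * x)))
    (F' := fun (s : ℂ) (x : ℝ) => -(x : ℂ) * Complex.exp (-(s * x)))
    (x₀ := s₀) (bound := fun _ => 2 / s₀.re) (s := Metric.ball s₀ ε) (Metric.ball_mem_nhds s₀ hε0)
    (Filter.Eventually.of_forall fun s => (cexp_cont s).aestronglyMeasurable)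
    ?_ ((Complex.continuous_ofReal.neg.mul (cexp_cont s₀)).aestronglyMeasurable) ?_
    (integrable_const _) ?_
  · exact key.2
  · -- Integrable (F s₀)
    refine Integrable.mono' (integrable_const 1) (cexp_cont s₀).aestronglyMeasurable ?_
    filter_upwards [ae_nonneg hρ] with x hx
    rw [norm_cexp]
    exact Real.exp_le_one_iff.mpr (by nlinarith)
  · -- bound
    filter_upwards [ae_nonneg hρ] with x hx s hs
    rw [norm_mul, norm_cexp, norm_neg, Complex.norm_real, Real.norm_eq_abs, abs_of_nonneg hx]
    have hre : ε ≤ s.re := by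
      have := Complex.abs_re_le_norm (s - s₀)
      rw [Complex.sub_re] at this
      have hd : dist s s₀ < ε := Metric.mem_ball.mp hs
      rw [Complex.dist_eq] at hd
      have : |s.re - s₀.re| < ε := lt_of_le_of_lt this hd
      have := abs_lt.mp this
      rw [hε]; linarith [this.1]
    have h1 : Real.exp (-(s.re * x)) ≤ Real.exp (-(ε * x)) :=
      Real.exp_le_exp.mpr (by nlinarith)
    have h2 : x * Real.exp (-(ε * x)) ≤ 2 / s₀.re := by
      rw [Real.exp_neg]
      rw [show (2 : ℝ) / s₀.re = 1 / ε by rw [hε]; ring]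
      have hexp := Real.add_one_le_exp (ε * x)
      have hpos := Real.exp_pos (ε * x)
      rw [mul_inv_le_iff₀ hpos, one_div, inv_mul_eq_div, le_div_iff₀ hε0]
      nlinarith
    calc x * Real.exp (-(s.re * x)) ≤ x * Real.exp (-(ε * x)) :=
          mul_le_mul_of_nonneg_left h1 hx
      _ ≤ 2 / s₀.re := h2
  · -- differentiability
    refine Filter.Eventually.of_forall fun x s _ => ?_
    have h1 : HasDerivAt (fun s : ℂ => -(s * (x : ℂ))) (-(x : ℂ)) s := by
      have h := ((hasDerivAt_id s).mul_const ((x : ℝ) : ℂ)).neg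
      simp only [id, one_mul] at h
      exact h
    have := h1.cexp
    rw [mul_comm]
    exact this

lemma clst_analytic {ρ : Measure ℝ} [IsProbabilityMeasure ρ] (hρ : ρ (Set.Iio 0) = 0) :
    AnalyticOnNhd ℂ (clst ρ) {s : ℂ | 0 < s.re} := by
  have hopen : IsOpen {s : ℂ | 0 < s.re} := isOpen_lt continuous_const Complex.continuous_re
  refine DifferentiableOn.analyticOnNhd (fun s hs => ?_) hopen
  exact ((clst_hasDerivAt hρ hs).differentiableAt).differentiableWithinAt

lemma lst_inj_of_Icc {μ ν : Measure ℝ} [IsProbabilityMeasure μ] [IsProbabilityMeasure ν]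
    (hμ : μ (Set.Iio 0) = 0) (hν : ν (Set.Iio 0) = 0) {b : ℝ} (hb : 0 < b)
    (h : ∀ τ ∈ Set.Icc (0:ℝ) b, lst μ τ = lst ν τ) : μ = ν := by
  set U : Set ℂ := {s : ℂ | 0 < s.re} with hU
  have hconv : Convex ℝ U := convex_halfSpace_re_gt 0
  have hpre : IsPreconnected U := hconv.isPreconnected
  set τseq : ℕ → ℝ := fun n => b / 2 + b / 2 * (1 / 2 : ℝ) ^ (n + 1) with hτseq
  have hpow : ∀ n : ℕ, (0:ℝ) < (1/2:ℝ) ^ (n+1) ∧ ((1:ℝ)/2) ^ (n+1) ≤ 1/2 := by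
    intro n
    refine ⟨by positivity, ?_⟩
    calc ((1:ℝ)/2) ^ (n+1) ≤ (1/2:ℝ) ^ 1 :=
          pow_le_pow_of_le_one (by norm_num) (by norm_num) (by omega)
      _ = 1/2 := pow_one _
  have hτmem : ∀ n, τseq n ∈ Set.Icc (0:ℝ) b := by
    intro n
    obtain ⟨h1, h2⟩ := hpow n
    simp only [hτseq, Set.mem_Icc]
    constructor
    · nlinarith
    · nlinarith
  have hτgt : ∀ n, b / 2 < τseq n := by
    intro n
    obtain ⟨h1, h2⟩ := hpow n
    simp only [hτseq]
    nlinarith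
  have htend : Filter.Tendsto (fun n => ((τseq n : ℝ) : ℂ)) Filter.atTop (𝓝[≠] ((b/2 : ℝ) : ℂ)) := by
    refine tendsto_nhdsWithin_of_tendsto_nhds_of_eventually_within _ ?_ ?_
    · refine (Complex.continuous_ofReal.tendsto _).comp ?_
      have : Filter.Tendsto τseq Filter.atTop (𝓝 (b/2 + b/2 * 0)) := by
        refine Filter.Tendsto.add tendsto_const_nhds (Filter.Tendsto.const_mul _ ?_)
        have := tendsto_pow_atTop_nhds_zero_of_lt_one (by norm_num : (0:ℝ) ≤ 1/2)
          (by norm_num : (1/2:ℝ) < 1)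
        exact this.comp (Filter.tendsto_add_atTop_nat 1)
      simpa using this
    · refine Filter.Eventually.of_forall fun n => ?_
      simp only [Set.mem_compl_iff, Set.mem_singleton_iff]
      intro hc
      have := Complex.ofReal_inj.mp hc
      linarith [hτgt n]
  have hfreq : ∃ᶠ z in 𝓝[≠] ((b/2 : ℝ) : ℂ), clst μ z = clst ν z := by
    refine htend.frequently (Filter.Frequently.of_forall fun n => ?_)
    rw [clst_real, clst_real, h _ (hτmem n)]
  have hmem : ((b/2 : ℝ) : ℂ) ∈ U := by
    simp only [hU, Set.mem_setOf_eq, Complex.ofReal_re]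
    positivity
  have hEq : Set.EqOn (clst μ) (clst ν) U :=
    (clst_analytic hμ).eqOn_of_preconnected_of_frequently_eq (clst_analytic hν) hpre hmem hfreq
  refine lst_inj hμ hν fun τ hτ => ?_
  rcases eq_or_lt_of_le hτ with h0 | h0
  · rw [← h0, lst_zero, lst_zero]
  · have : ((τ : ℝ) : ℂ) ∈ U := by
      simp only [hU, Set.mem_setOf_eq, Complex.ofReal_re]; exact h0
    have := hEq this
    rw [clst_real, clst_real] at this
    exact_mod_cast this

end Stmt8Aux
namespace Stmt8Aux

lemma alg_compose {p p' M : ℝ} (hp0 : 0 < p) (hp1 : p < 1) (hp'0 : 0 < p') (hp'1 : p' < 1)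
    (hM0 : 0 < M) (hM1 : M ≤ 1) :
    M / (p + (1 - p) * M) =
      p' * (M / (p * p' + (1 - p * p') * M)) /
        (1 - (1 - p') * (M / (p * p' + (1 - p * p') * M))) := by
  have hD1 : 0 < p + (1 - p) * M := by nlinarith
  have hD2 : 0 < p * p' + (1 - p * p') * M := by nlinarith
  have h2 : 1 - (1 - p') * (M / (p * p' + (1 - p * p') * M))
      = (p' * (p + (1 - p) * M)) / (p * p' + (1 - p * p') * M) := by
    rw [eq_div_iff hD2.ne', sub_mul, mul_assoc, div_mul_cancel₀ _ hD2.ne']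
    ring
  rw [h2]
  rw [mul_div_assoc', div_div_div_cancel_right₀ hD2.ne', mul_div_mul_left _ _ hp'0.ne']

end Stmt8Aux
open Stmt8Aux in
/-- Fix λ > 0. A distribution on [0,∞) with LST φ is g.i.d. iff for every
p ∈ (0,1) the function `G(z;λ,p)` is the pgf of a λ-Poisson mixture; in that case the
mixing distribution is itself g.i.d. with LST `φ_p(τ) = φ(τ)/(p + (1-p)φ(τ))`. -/
theorem stmt8 (μ : Measure ℝ) [IsProbabilityMeasure μ] (hsupp : μ (Set.Iio 0) = 0)
    (l : ℝ) (hl : 0 < l) :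
    (GIDM μ ↔ ∀ p ∈ Set.Ioo (0 : ℝ) 1, ∃ ν : Measure ℝ,
        IsProbabilityMeasure ν ∧ ν (Set.Iio 0) = 0 ∧
        ∀ z : ℝ, |z| ≤ 1 →
          lst μ (l * (1 - z)) / (p + (1 - p) * lst μ (l * (1 - z))) = lst ν (l * (1 - z))) ∧
    (GIDM μ → ∀ p ∈ Set.Ioo (0 : ℝ) 1, ∃ ν : Measure ℝ,
        IsProbabilityMeasure ν ∧ ν (Set.Iio 0) = 0 ∧ GIDM ν ∧
        (∀ τ ≥ (0 : ℝ), lst ν τ = lst μ τ / (p + (1 - p) * lst μ τ)) ∧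
        ∀ z : ℝ, |z| ≤ 1 →
          lst μ (l * (1 - z)) / (p + (1 - p) * lst μ (l * (1 - z))) = lst ν (l * (1 - z))) := by
  have hl2 : (0:ℝ) < 2 * l := by linarith
  have tau_nonneg : ∀ z : ℝ, |z| ≤ 1 → 0 ≤ l * (1 - z) := by
    intro z hz
    have := abs_le.mp hz
    have := this.2
    nlinarith
  constructor
  · constructor
    · -- forward direction of iff
      intro hG p hp
      obtain ⟨ν, hνp, hνs, hμeq⟩ := hG p hp
      haveI := hνp
      refine ⟨ν, hνp, hνs, fun z hz => ?_⟩
      have hτ : 0 ≤ l * (1 - z) := tau_nonneg z hz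
      have hM : lst μ (l * (1 - z)) = p * lst ν (l * (1 - z)) /
          (1 - (1 - p) * lst ν (l * (1 - z))) := by
        rw [hμeq]
        exact lst_cmpd hp hνs hτ
      rw [hM]
      exact alg_forward hp.1 hp.2 (lst_pos hνs hτ) (lst_le_one hνs hτ)
    · -- backward direction of iff
      intro hAll p hp
      obtain ⟨ν, hνp, hνs, hz⟩ := hAll p hp
      haveI := hνp
      refine ⟨ν, hνp, hνs, ?_⟩
      haveI := cmpd_prob hp ν
      have hcm : μ = cmpd p ν := by
        refine lst_inj_of_Icc hsupp (cmpd_supp hνs) hl2 fun τ hτm => ?_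
        obtain ⟨hτ0, hτb⟩ := hτm
        have hzz : |1 - τ / l| ≤ 1 := by
          rw [abs_le]
          constructor
          · have : τ / l ≤ 2 := by rw [div_le_iff₀ hl]; linarith
            linarith
          · have : 0 ≤ τ / l := div_nonneg hτ0 hl.le
            linarith
        have hlz : l * (1 - (1 - τ / l)) = τ := by field_simp; ring
        have hkey := hz (1 - τ / l) hzz
        rw [hlz] at hkey
        rw [lst_cmpd hp hνs hτ0, ← hkey]
        exact (alg_backward hp.1 hp.2 (lst_pos hsupp hτ0) (lst_le_one hsupp hτ0)).symm
      exact hcm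
  · -- second statement
    intro hG p hp
    obtain ⟨ν, hνp, hνs, hμeq⟩ := hG p hp
    haveI := hνp
    have hlst : ∀ τ ≥ (0:ℝ), lst ν τ = lst μ τ / (p + (1 - p) * lst μ τ) := by
      intro τ hτ
      have hM : lst μ τ = p * lst ν τ / (1 - (1 - p) * lst ν τ) := by
        rw [hμeq]; exact lst_cmpd hp hνs hτ
      rw [hM]
      exact (alg_forward hp.1 hp.2 (lst_pos hνs hτ) (lst_le_one hνs hτ)).symm
    refine ⟨ν, hνp, hνs, ?_, hlst, fun z hz => ?_⟩
    · -- GIDM ν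
      intro p' hp'
      have hpp' : p * p' ∈ Set.Ioo (0:ℝ) 1 := by
        obtain ⟨h1, h2⟩ := hp; obtain ⟨h3, h4⟩ := hp'
        exact ⟨mul_pos h1 h3, by nlinarith⟩
      obtain ⟨σ, hσp, hσs, hμeq'⟩ := hG (p * p') hpp'
      haveI := hσp
      haveI := cmpd_prob hp' σ
      refine ⟨σ, hσp, hσs, ?_⟩
      have hνeq : ν = cmpd p' σ := by
        refine lst_inj hνs (cmpd_supp hσs) fun τ hτ => ?_
        rw [lst_cmpd hp' hσs hτ, hlst τ hτ]
        have hσlst : lst σ τ = lst μ τ / (p * p' + (1 - p * p') * lst μ τ) := by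
          have hM : lst μ τ = (p * p') * lst σ τ / (1 - (1 - p * p') * lst σ τ) := by
            rw [hμeq']; exact lst_cmpd hpp' hσs hτ
          rw [hM]
          exact (alg_forward hpp'.1 hpp'.2 (lst_pos hσs hτ) (lst_le_one hσs hτ)).symm
        rw [hσlst]
        exact alg_compose hp.1 hp.2 hp'.1 hp'.2 (lst_pos hsupp hτ) (lst_le_one hsupp hτ)
      exact hνeq
    · exact (hlst _ (tau_nonneg z hz)).symm
end

section
/- Let (p_n, n ≥ 0) be an infinitely divisible distribution on the nonnegative integers with Lévy measure (r_n, n ≥ 0), i.e., (n+1)p_{n+1} = Σ_{k=0}^n r_k p_{n-k} with r_n ≥ 0. Then (p_n) is geometrically infinitely divisible if and only if the sequence (b_n, n ≥ 0) defined by b_0 = 0 and (n+1)b_{n+1} = r_n - Σ_{k=1}^n b_k r_{n-k} is nonnegative; in that case Σ_{n=0}^∞ b_n < 1. -/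
open MeasureTheory Real Set

namespace Stmt16
open PowerSeries

lemma mk_seqConv (f g : ℕ → ℝ) :
    PowerSeries.mk (seqConv f g) = PowerSeries.mk f * PowerSeries.mk g := by
  ext n
  rw [coeff_mk, coeff_mul, Finset.Nat.sum_antidiagonal_eq_sum_range_succ_mk]
  simp [seqConv]

lemma mk_seqConvPow (f : ℕ → ℝ) (m : ℕ) :
    PowerSeries.mk (seqConvPow f m) = (PowerSeries.mk f) ^ m := by
  induction m with
  | zero =>
      ext n
      rw [coeff_mk, pow_zero, coeff_one]
      simp [seqConvPow]
  | succ m ih =>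
      show PowerSeries.mk (seqConv f (seqConvPow f m)) = _
      rw [mk_seqConv, ih, pow_succ']

lemma seqConv_eq_coeff (f g : ℕ → ℝ) (n : ℕ) :
    seqConv f g n = PowerSeries.coeff (R := ℝ) n (PowerSeries.mk f * PowerSeries.mk g) := by
  rw [← mk_seqConv, coeff_mk]

lemma seqConvPow_eq_coeff (f : ℕ → ℝ) (m n : ℕ) :
    seqConvPow f m n = PowerSeries.coeff (R := ℝ) n ((PowerSeries.mk f) ^ m) := by
  rw [← mk_seqConvPow, coeff_mk]

lemma seqConv_nonneg {f g : ℕ → ℝ} (hf : ∀ n, 0 ≤ f n) (hg : ∀ n, 0 ≤ g n) (n : ℕ) :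
    0 ≤ seqConv f g n :=
  Finset.sum_nonneg fun k _ => mul_nonneg (hf k) (hg _)

lemma seqConvPow_nonneg {f : ℕ → ℝ} (hf : ∀ n, 0 ≤ f n) (m n : ℕ) :
    0 ≤ seqConvPow f m n := by
  induction m generalizing n with
  | zero => simp only [seqConvPow]; positivity
  | succ m ih => exact seqConv_nonneg hf (fun k => ih k) n

lemma summable_seqConv {f g : ℕ → ℝ} (hf0 : ∀ n, 0 ≤ f n) (hg0 : ∀ n, 0 ≤ g n)
    (hf : Summable f) (hg : Summable g) : Summable (seqConv f g) := by
  have hfn : Summable fun n => ‖f n‖ := by simpa [Real.norm_eq_abs, abs_of_nonneg (hf0 _)] using hf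
  have hgn : Summable fun n => ‖g n‖ := by simpa [Real.norm_eq_abs, abs_of_nonneg (hg0 _)] using hg
  have := summable_norm_sum_mul_antidiagonal_of_summable_norm hfn hgn
  have h2 := this.of_norm
  refine h2.congr fun n => ?_
  rw [Finset.Nat.sum_antidiagonal_eq_sum_range_succ_mk]
  rfl

lemma tsum_seqConv {f g : ℕ → ℝ} (hf0 : ∀ n, 0 ≤ f n) (hg0 : ∀ n, 0 ≤ g n)
    (hf : Summable f) (hg : Summable g) :
    ∑' n, seqConv f g n = (∑' n, f n) * (∑' n, g n) := by
  have hfn : Summable fun n => ‖f n‖ := by simpa [Real.norm_eq_abs, abs_of_nonneg (hf0 _)] using hf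
  have hgn : Summable fun n => ‖g n‖ := by simpa [Real.norm_eq_abs, abs_of_nonneg (hg0 _)] using hg
  rw [tsum_mul_tsum_eq_tsum_sum_antidiagonal_of_summable_norm hfn hgn]
  refine tsum_congr fun n => ?_
  rw [Finset.Nat.sum_antidiagonal_eq_sum_range_succ_mk]
  rfl


lemma lemA_PS (p r b : ℕ → ℝ) (hb0 : b 0 = 0)
    (hid : ∀ n : ℕ, ((n : ℝ) + 1) * p (n + 1) = ∑ k ∈ Finset.range (n + 1), r k * p (n - k))
    (hb : ∀ n : ℕ, ((n : ℝ) + 1) * b (n + 1) = r n - ∑ k ∈ Finset.Icc 1 n, b k * r (n - k)) :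
    PowerSeries.mk p * (1 - PowerSeries.mk b) = C (R := ℝ) (p 0) := by
  set P := PowerSeries.mk p with hP
  set B := PowerSeries.mk b with hB
  set R := PowerSeries.mk r with hR
  have hcoeffmul : ∀ (f g : ℕ → ℝ) (n : ℕ), coeff (R := ℝ) n (PowerSeries.mk f * PowerSeries.mk g)
      = ∑ k ∈ Finset.range (n + 1), f k * g (n - k) := by
    intro f g n
    rw [coeff_mul, Finset.Nat.sum_antidiagonal_eq_sum_range_succ_mk]
    simp
  have hdP : d⁄dX ℝ P = R * P := by
    ext n
    rw [coeff_derivative, hcoeffmul, coeff_mk, mul_comm]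
    exact hid n
  have hdB : d⁄dX ℝ B = R * (1 - B) := by
    ext n
    rw [coeff_derivative, coeff_mk, mul_comm, mul_sub, mul_one, map_sub, hcoeffmul, coeff_mk]
    rw [hb n]
    congr 1
    -- ∑_{k∈range(n+1)} r k * b (n-k) = ∑_{k∈Icc 1 n} b k * r (n-k)
    have h1 : ∑ k ∈ Finset.range (n + 1), r k * b (n - k)
        = ∑ k ∈ Finset.range (n + 1), b k * r (n - k) := by
      rw [← Finset.sum_range_reflect]
      refine Finset.sum_congr rfl fun k hk => ?_
      rw [Finset.mem_range] at hk
      have : n + 1 - 1 - k = n - k := by omega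
      rw [this]
      have : n - (n - k) = k := by omega
      rw [this, mul_comm]
    rw [h1, Finset.sum_range_succ']
    have h2 : ∑ i ∈ Finset.range n, b (i + 1) * r (n - (i + 1))
        = ∑ k ∈ Finset.Icc 1 n, b k * r (n - k) := by
      rw [← Finset.Ico_add_one_right_eq_Icc, Finset.sum_Ico_eq_sum_range]
      have : n + 1 - 1 = n := rfl
      rw [this]
      refine Finset.sum_congr rfl fun i _ => by rw [add_comm 1 i]
    rw [h2, hb0]
    ring
  have key : d⁄dX ℝ (P * (1 - B)) = d⁄dX ℝ (C (R := ℝ) (p 0)) := by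
    rw [Derivation.leibniz, smul_eq_mul, smul_eq_mul, map_sub, Derivation.map_one_eq_zero, hdP,
      hdB, derivative_C]
    ring
  have hcc : constantCoeff (R := ℝ) (P * (1 - B)) = constantCoeff (R := ℝ) (C (R := ℝ) (p 0)) := by
    rw [map_mul, map_sub, map_one, constantCoeff_C]
    simp [hP, hB, constantCoeff_mk, hb0]
  exact derivative.ext key hcc

noncomputable def gidF (b : ℕ → ℝ) (c t : ℝ) : ℕ → ℝ :=
  fun n => c * ∑ m ∈ Finset.range (n + 1), t ^ m * seqConvPow b m n

lemma seqConvPow_eq_zero {b : ℕ → ℝ} (hb0 : b 0 = 0) :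
    ∀ m n, n < m → seqConvPow b m n = 0 := by
  intro m
  induction m with
  | zero => intro n hn; omega
  | succ m ih =>
      intro n hn
      show seqConv b (seqConvPow b m) n = 0
      refine Finset.sum_eq_zero fun k hk => ?_
      rcases Nat.eq_zero_or_pos k with rfl | hkpos
      · rw [hb0, zero_mul]
      · rw [Finset.mem_range] at hk
        rw [ih (n - k) (by omega), mul_zero]

lemma seqConvPow_one (b : ℕ → ℝ) (n : ℕ) : seqConvPow b 1 n = b n := by
  show seqConv b (seqConvPow b 0) n = b n
  unfold seqConv
  rw [Finset.sum_eq_single n]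
  · simp [seqConvPow]
  · intro k hk hkn
    rw [Finset.mem_range] at hk
    have : n - k ≠ 0 := by omega
    simp [seqConvPow, this]
  · intro h; exact absurd (Finset.self_mem_range_succ n) h

lemma gidF_rel {b : ℕ → ℝ} (hb0 : b 0 = 0) (c t : ℝ) (n : ℕ) :
    gidF b c t n = c * (if n = 0 then 1 else 0) + t * seqConv b (gidF b c t) n := by
  have hconv : seqConv b (gidF b c t) n
      = c * ∑ m ∈ Finset.range (n + 1), t ^ m * seqConvPow b (m + 1) n := by
    have step1 : seqConv b (gidF b c t) n
        = ∑ k ∈ Finset.range (n + 1), ∑ m ∈ Finset.range (n + 1),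
            c * (t ^ m * (b k * seqConvPow b m (n - k))) := by
      unfold seqConv gidF
      refine Finset.sum_congr rfl fun k hk => ?_
      rw [Finset.mem_range] at hk
      have hsub : ∑ m ∈ Finset.range (n - k + 1), t ^ m * seqConvPow b m (n - k)
          = ∑ m ∈ Finset.range (n + 1), t ^ m * seqConvPow b m (n - k) := by
        refine Finset.sum_subset ?_ ?_
        · intro m hm
          rw [Finset.mem_range] at hm ⊢
          omega
        · intro m hm hm'
          rw [Finset.mem_range] at hm hm'
          rw [seqConvPow_eq_zero hb0 m (n - k) (by omega), mul_zero]
      rw [hsub, Finset.mul_sum, Finset.mul_sum]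
      refine Finset.sum_congr rfl fun m _ => by ring
    rw [step1, Finset.sum_comm, Finset.mul_sum]
    refine Finset.sum_congr rfl fun m _ => ?_
    show _ = c * (t ^ m * seqConv b (seqConvPow b m) n)
    unfold seqConv
    rw [Finset.mul_sum, Finset.mul_sum]
  rw [hconv]
  unfold gidF
  rw [Finset.sum_range_succ' (fun m => t ^ m * seqConvPow b m n) n]
  have h0 : seqConvPow b 0 n = if n = 0 then 1 else 0 := rfl
  have hlast : ∑ m ∈ Finset.range n, t ^ (m + 1) * seqConvPow b (m + 1) n
      = ∑ m ∈ Finset.range (n + 1), t ^ (m + 1) * seqConvPow b (m + 1) n := by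
    rw [Finset.sum_range_succ, seqConvPow_eq_zero hb0 (n + 1) n (by omega), mul_zero, add_zero]
  rw [h0, pow_zero, one_mul, mul_add, hlast, Finset.mul_sum, Finset.mul_sum, Finset.mul_sum]
  rw [add_comm]
  congr 1
  refine Finset.sum_congr rfl fun m _ => by ring

-- power series version of gidF_rel
lemma gidF_PS {b : ℕ → ℝ} (hb0 : b 0 = 0) (c t : ℝ) :
    PowerSeries.mk (gidF b c t)
      = C (R := ℝ) c + C (R := ℝ) t * (PowerSeries.mk b * PowerSeries.mk (gidF b c t)) := by
  ext n
  rw [coeff_mk, map_add, coeff_C]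
  have : (coeff (R := ℝ) n) (C (R := ℝ) t * (PowerSeries.mk b * PowerSeries.mk (gidF b c t)))
      = t * seqConv b (gidF b c t) n := by
    rw [coeff_C_mul, coeff_mul, Finset.Nat.sum_antidiagonal_eq_sum_range_succ_mk]
    simp [seqConv]
  rw [this, gidF_rel hb0 c t n]
  by_cases h : n = 0 <;> simp [h]

lemma PS4 {p b f' : ℕ → ℝ} {p' a : ℝ} (hb0 : b 0 = 0)
    (hA : PowerSeries.mk p * (1 - PowerSeries.mk b) = C (R := ℝ) (p 0))
    (hF : C (R := ℝ) a * PowerSeries.mk f'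
      = C (R := ℝ) (p 0) + C (R := ℝ) p' * (PowerSeries.mk b * PowerSeries.mk f'))
    (ha : a = p' + (1 - p') * p 0) (hane : a ≠ 0) :
    PowerSeries.mk p = C (R := ℝ) p' * PowerSeries.mk f'
      + C (R := ℝ) (1 - p') * (PowerSeries.mk f' * PowerSeries.mk p) := by
  set u : ℝ⟦X⟧ := C (R := ℝ) a - C (R := ℝ) p' * PowerSeries.mk b with hu
  have hunit : IsUnit u := by
    rw [isUnit_iff_constantCoeff]
    have : constantCoeff (R := ℝ) u = a := by
      simp [hu, constantCoeff_mk, hb0]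
    rw [this]
    exact isUnit_iff_ne_zero.mpr hane
  have hCa : C (R := ℝ) a = C (R := ℝ) p' + C (R := ℝ) (1 - p') * C (R := ℝ) (p 0) := by
    rw [← map_mul, ← map_add]
    exact congrArg (C (R := ℝ)) ha
  have h2 : u * PowerSeries.mk p
      = u * (C (R := ℝ) p' * PowerSeries.mk f'
        + C (R := ℝ) (1 - p') * (PowerSeries.mk f' * PowerSeries.mk p)) := by
    linear_combination (-(C (R := ℝ) p' + C (R := ℝ) (1 - p') * PowerSeries.mk p)) * hF
      + PowerSeries.mk p * hCa + C (R := ℝ) p' * hA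
  exact hunit.mul_left_cancel h2

lemma PS5 {p f' : ℕ → ℝ} {p' : ℝ}
    (h4 : PowerSeries.mk p = C (R := ℝ) p' * PowerSeries.mk f'
      + C (R := ℝ) (1 - p') * (PowerSeries.mk f' * PowerSeries.mk p)) (K : ℕ) :
    PowerSeries.mk p
      = (∑ k ∈ Finset.range K, C (R := ℝ) (p' * (1 - p') ^ k) * (PowerSeries.mk f') ^ (k + 1))
        + C (R := ℝ) ((1 - p') ^ K) * ((PowerSeries.mk f') ^ K * PowerSeries.mk p) := by
  induction K with
  | zero => simp
  | succ K ih =>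
      have tail : C (R := ℝ) ((1 - p') ^ K) * ((PowerSeries.mk f') ^ K * PowerSeries.mk p)
          = C (R := ℝ) (p' * (1 - p') ^ K) * (PowerSeries.mk f') ^ (K + 1)
            + C (R := ℝ) ((1 - p') ^ (K + 1)) * ((PowerSeries.mk f') ^ (K + 1) * PowerSeries.mk p) := by
        simp only [map_mul, map_pow, pow_succ]
        linear_combination (C (R := ℝ) (1 - p') ^ K * (PowerSeries.mk f') ^ K) * h4
      rw [Finset.sum_range_succ]
      calc PowerSeries.mk p = _ := ih
        _ = _ := by rw [tail]; ring


lemma pmf_summable {f : ℕ → ℝ} (h : IsPMF f) : Summable f := by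
  by_contra hs
  have h2 := h.2
  rw [tsum_eq_zero_of_not_summable hs] at h2
  exact one_ne_zero h2.symm

lemma pmf_le_one {f : ℕ → ℝ} (h : IsPMF f) (n : ℕ) : f n ≤ 1 := by
  conv_rhs => rw [← h.2]
  exact Summable.le_tsum (pmf_summable h) n fun m _ => h.1 m

lemma summable_seqConvPow {f : ℕ → ℝ} (hf0 : ∀ n, 0 ≤ f n) (hf : Summable f) (m : ℕ) :
    Summable (seqConvPow f m) := by
  induction m with
  | zero =>
      refine summable_of_ne_finset_zero (s := {0}) fun n hn => ?_
      simp only [Finset.mem_singleton] at hn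
      simp [seqConvPow, hn]
  | succ m ih => exact summable_seqConv hf0 (seqConvPow_nonneg hf0 m) hf ih

lemma tsum_seqConvPow {f : ℕ → ℝ} (hf0 : ∀ n, 0 ≤ f n) (hf : Summable f) (m : ℕ) :
    ∑' n, seqConvPow f m n = (∑' n, f n) ^ m := by
  induction m with
  | zero =>
      show (∑' n : ℕ, if n = 0 then (1 : ℝ) else 0) = 1
      rw [tsum_eq_single 0]
      · simp
      · intro n hn; simp [hn]
  | succ m ih =>
      show ∑' n, seqConv f (seqConvPow f m) n = _
      rw [tsum_seqConv hf0 (seqConvPow_nonneg hf0 m) hf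
        (summable_seqConvPow hf0 hf m), ih, pow_succ, mul_comm]

lemma isPMF_seqConvPow {f : ℕ → ℝ} (h : IsPMF f) (m : ℕ) : IsPMF (seqConvPow f m) :=
  ⟨seqConvPow_nonneg h.1 m, by rw [tsum_seqConvPow h.1 (pmf_summable h), h.2, one_pow]⟩

lemma p0_pos {p r : ℕ → ℝ} (hp : IsPMF p)
    (hid : ∀ n : ℕ, ((n : ℝ) + 1) * p (n + 1) = ∑ k ∈ Finset.range (n + 1), r k * p (n - k)) :
    0 < p 0 := by
  rcases (hp.1 0).lt_or_eq with h | h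
  · exact h
  · exfalso
    have hall : ∀ n, p n = 0 := by
      intro n
      induction n using Nat.strong_induction_on with
      | _ n ih =>
          match n with
          | 0 => exact h.symm
          | Nat.succ m =>
              have := hid m
              rw [Finset.sum_eq_zero (fun k hk => by
                rw [ih (m - k) (by omega), mul_zero])] at this
              have hne : ((m : ℝ) + 1) ≠ 0 := by positivity
              exact (mul_eq_zero.mp this).resolve_left hne
    have : ∑' n, p n = 0 := by simp [hall]
    rw [hp.2] at this
    exact one_ne_zero this

lemma lemA_coeff {p b : ℕ → ℝ}
    (hA : PowerSeries.mk p * (1 - PowerSeries.mk b) = C (R := ℝ) (p 0)) (n : ℕ) :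
    p n = (if n = 0 then p 0 else 0) + seqConv b p n := by
  have h1 : PowerSeries.mk p = C (R := ℝ) (p 0) + PowerSeries.mk b * PowerSeries.mk p := by
    linear_combination hA
  have h2 := congrArg (coeff (R := ℝ) n) h1
  rwa [coeff_mk, map_add, coeff_C, ← mk_seqConv, coeff_mk] at h2

lemma b_facts {p b : ℕ → ℝ} (hp : IsPMF p) (hp0 : 0 < p 0)
    (hbnn : ∀ n, 0 ≤ b n) (hb0 : b 0 = 0)
    (hA : ∀ n, p n = (if n = 0 then p 0 else 0) + seqConv b p n) :
    Summable b ∧ ∑' n, b n = 1 - p 0 := by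
  have hsp := pmf_summable hp
  have hbound : ∀ n, b n * p 0 ≤ p n := by
    intro n
    match n with
    | 0 => rw [hb0, zero_mul]; exact hp.1 0
    | Nat.succ m =>
        have := hA (m + 1)
        rw [if_neg (Nat.succ_ne_zero m), zero_add] at this
        rw [this]
        have : b (m + 1) * p 0 = b (m + 1) * p (m + 1 - (m + 1)) := by norm_num
        rw [this]
        exact Finset.single_le_sum (f := fun k => b k * p (m + 1 - k))
          (fun k _ => mul_nonneg (hbnn k) (hp.1 _)) (Finset.self_mem_range_succ (m + 1))
  have hSb : Summable b := by
    refine Summable.of_nonneg_of_le hbnn (fun n => ?_) (hsp.mul_right (p 0)⁻¹)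
    rw [← mul_le_mul_iff_of_pos_right hp0]
    calc b n * p 0 ≤ p n := hbound n
      _ = p n * (p 0)⁻¹ * p 0 := by field_simp
  refine ⟨hSb, ?_⟩
  have hite : Summable (fun n : ℕ => if n = 0 then p 0 else 0) := by
    refine summable_of_ne_finset_zero (s := {0}) fun n hn => ?_
    simp only [Finset.mem_singleton] at hn
    simp [hn]
  have hsc := summable_seqConv hbnn hp.1 hSb hsp
  have h1 : ∑' n, p n = p 0 + (∑' n, b n) * (∑' n, p n) := by
    calc ∑' n, p n = ∑' n, ((if n = 0 then p 0 else 0) + seqConv b p n) := tsum_congr hA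
      _ = (∑' n : ℕ, if n = 0 then p 0 else 0) + ∑' n, seqConv b p n := Summable.tsum_add hite hsc
      _ = p 0 + (∑' n, b n) * (∑' n, p n) := by
          rw [tsum_seqConv hbnn hp.1 hSb hsp]
          congr 1
          rw [tsum_eq_single 0]
          · simp
          · intro n hn; simp [hn]
  rw [hp.2] at h1
  linarith


-- The F-equation for the explicit candidate, for any parameters with a*c = p0, a*t = p'.
lemma gidF_Feq {p b : ℕ → ℝ} {p' a : ℝ} (hb0 : b 0 = 0) (ha0 : a ≠ 0) :
    C (R := ℝ) a * PowerSeries.mk (gidF b (p 0 / a) (p' / a))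
      = C (R := ℝ) (p 0) + C (R := ℝ) p' * (PowerSeries.mk b * PowerSeries.mk (gidF b (p 0 / a) (p' / a))) := by
  have h := gidF_PS (b := b) hb0 (p 0 / a) (p' / a)
  calc C (R := ℝ) a * PowerSeries.mk (gidF b (p 0 / a) (p' / a))
      = C (R := ℝ) a * (C (R := ℝ) (p 0 / a)
        + C (R := ℝ) (p' / a) * (PowerSeries.mk b * PowerSeries.mk (gidF b (p 0 / a) (p' / a)))) := by
        rw [← h]
    _ = C (R := ℝ) (a * (p 0 / a)) + C (R := ℝ) (a * (p' / a))
        * (PowerSeries.mk b * PowerSeries.mk (gidF b (p 0 / a) (p' / a))) := by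
        rw [map_mul, map_mul]; ring
    _ = _ := by rw [mul_div_cancel₀ _ ha0, mul_div_cancel₀ _ ha0]

-- coefficientwise version of PS5
lemma coeff5 {p f : ℕ → ℝ} {p' : ℝ}
    (h4 : PowerSeries.mk p = C (R := ℝ) p' * PowerSeries.mk f
      + C (R := ℝ) (1 - p') * (PowerSeries.mk f * PowerSeries.mk p)) (K n : ℕ) :
    p n = (∑ k ∈ Finset.range K, p' * (1 - p') ^ k * seqConvPow f (k + 1) n)
        + (1 - p') ^ K * seqConv (seqConvPow f K) p n := by
  have h := congrArg (coeff (R := ℝ) n) (PS5 h4 K)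
  rw [coeff_mk, map_add, map_sum] at h
  rw [h]
  congr 1
  · refine Finset.sum_congr rfl fun k _ => ?_
    rw [coeff_C_mul, ← mk_seqConvPow, coeff_mk]
  · rw [coeff_C_mul, ← mk_seqConvPow, ← mk_seqConv, coeff_mk]

lemma gid_of_bnn {p b : ℕ → ℝ} (hp : IsPMF p) (hp0 : 0 < p 0) (hb0 : b 0 = 0)
    (hbnn : ∀ n, 0 ≤ b n)
    (hA : PowerSeries.mk p * (1 - PowerSeries.mk b) = C (R := ℝ) (p 0))
    (hSb : Summable b) (htb : ∑' n, b n = 1 - p 0) : GID p := by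
  intro p' hp'
  obtain ⟨hp'0, hp'1⟩ := hp'
  set a : ℝ := p' + (1 - p') * p 0 with ha_def
  have hp01 : p 0 ≤ 1 := pmf_le_one hp 0
  have ha0 : 0 < a := by
    have : 0 < (1 - p') * p 0 := mul_pos (by linarith) hp0
    linarith
  set t : ℝ := p' / a with ht_def
  set c : ℝ := p 0 / a with hc_def
  set f : ℕ → ℝ := gidF b c t with hf_def
  have ht0 : 0 ≤ t := div_nonneg hp'0.le ha0.le
  have hc0 : 0 ≤ c := div_nonneg hp0.le ha0.le
  have hf0 : ∀ n, 0 ≤ f n := by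
    intro n
    refine mul_nonneg hc0 (Finset.sum_nonneg fun m _ => ?_)
    exact mul_nonneg (pow_nonneg ht0 m) (seqConvPow_nonneg hbnn m n)
  have hFeq := gidF_Feq (p := p) (b := b) (p' := p') hb0 ha0.ne'
  have h4 := PS4 hb0 hA hFeq rfl ha0.ne'
  -- total mass of f is 1
  have htlt : t * (1 - p 0) < 1 := by
    rw [ht_def, div_mul_eq_mul_div, div_lt_one ha0]
    nlinarith
  have htnn : 0 ≤ t * (1 - p 0) := mul_nonneg ht0 (by linarith)
  set w : ℕ → ℕ → ℝ := fun m n => t ^ m * seqConvPow b m n with hw_def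
  have hu0 : ∀ q : ℕ × ℕ, 0 ≤ Function.uncurry w q := by
    intro q
    exact mul_nonneg (pow_nonneg ht0 _) (seqConvPow_nonneg hbnn _ _)
  have hSm : ∀ m, Summable (w m) := by
    intro m
    show Summable fun n => t ^ m * seqConvPow b m n
    exact (summable_seqConvPow hbnn hSb m).mul_left (t ^ m)
  have htm : ∀ m, ∑' n, w m n = (t * (1 - p 0)) ^ m := by
    intro m
    show (∑' n, t ^ m * seqConvPow b m n) = _
    rw [tsum_mul_left, tsum_seqConvPow hbnn hSb, htb, mul_pow]
  have hS2 : Summable fun m => ∑' n, w m n :=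
    Summable.congr (summable_geometric_of_lt_one htnn htlt) fun m => (htm m).symm
  have hSu : Summable (Function.uncurry w) :=
    (summable_prod_of_nonneg hu0).mpr ⟨hSm, hS2⟩
  have hfin : ∀ n, f n = c * ∑' m, w m n := by
    intro n
    show c * ∑ m ∈ Finset.range (n + 1), t ^ m * seqConvPow b m n = _
    congr 1
    refine (tsum_eq_sum fun m hm => ?_).symm
    rw [Finset.mem_range] at hm
    show t ^ m * seqConvPow b m n = 0
    rw [seqConvPow_eq_zero hb0 m n (by omega), mul_zero]
  have hcomm : ∑' n, ∑' m, w m n = ∑' m, ∑' n, w m n := Summable.tsum_comm hSu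
  have hgeom : ∑' m, ∑' n, w m n = (1 - t * (1 - p 0))⁻¹ := by
    rw [tsum_congr htm]
    exact tsum_geometric_of_lt_one htnn htlt
  have hval : (1 : ℝ) - t * (1 - p 0) = p 0 / a := by
    rw [ht_def]
    field_simp
    ring
  have hcol : Summable fun n => ∑' m, w m n := by
    have hswap : Summable (Function.uncurry fun n m => w m n) := by
      refine hSu.prod_symm.congr fun q => rfl
    exact ((summable_prod_of_nonneg fun q => hu0 q.swap).mp hswap).2
  have hSf : Summable f := ((hcol.mul_left c).congr fun n => (hfin n).symm)
  have htsumf : ∑' n, f n = 1 := by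
    rw [tsum_congr hfin, tsum_mul_left, hcomm, hgeom, hval, hc_def]
    rw [inv_div]
    field_simp
  have hfPMF : IsPMF f := ⟨hf0, htsumf⟩
  refine ⟨f, hfPMF, fun n => ?_⟩
  have hpow_le : ∀ K j, seqConvPow f K j ≤ 1 := fun K j =>
    pmf_le_one (isPMF_seqConvPow hfPMF K) j
  have hcb0 : ∀ K : ℕ, 0 ≤ seqConv (seqConvPow f K) p n := fun K =>
    seqConv_nonneg (seqConvPow_nonneg hf0 K) hp.1 n
  have hcb1 : ∀ K : ℕ, seqConv (seqConvPow f K) p n ≤ (n + 1 : ℝ) := by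
    intro K
    show ∑ k ∈ Finset.range (n + 1), seqConvPow f K k * p (n - k) ≤ ((n : ℝ) + 1)
    calc ∑ k ∈ Finset.range (n + 1), seqConvPow f K k * p (n - k)
        ≤ ∑ _k ∈ Finset.range (n + 1), (1 : ℝ) := by
          refine Finset.sum_le_sum fun k _ => ?_
          exact mul_le_one₀ (hpow_le K k) (hp.1 _) (pmf_le_one hp _)
      _ = ((n : ℝ) + 1) := by
          rw [Finset.sum_const, Finset.card_range]
          push_cast
          ring
  have hterm0 : ∀ k, 0 ≤ p' * (1 - p') ^ k * seqConvPow f (k + 1) n := fun k =>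
    mul_nonneg (mul_nonneg hp'0.le (pow_nonneg (by linarith) k)) (seqConvPow_nonneg hf0 _ n)
  have hK : ∀ K, ∑ k ∈ Finset.range K, p' * (1 - p') ^ k * seqConvPow f (k + 1) n
      = p n - (1 - p') ^ K * seqConv (seqConvPow f K) p n := by
    intro K
    have := coeff5 h4 K n
    linarith
  have h0 : Filter.Tendsto (fun K => (1 - p') ^ K * seqConv (seqConvPow f K) p n)
      Filter.atTop (nhds 0) := by
    have hg : Filter.Tendsto (fun K : ℕ => (1 - p') ^ K * ((n : ℝ) + 1))
        Filter.atTop (nhds 0) := by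
      have := (tendsto_pow_atTop_nhds_zero_of_lt_one (by linarith : (0:ℝ) ≤ 1 - p')
        (by linarith)).mul_const ((n : ℝ) + 1)
      simpa using this
    refine squeeze_zero (fun K => mul_nonneg (pow_nonneg (by linarith) K) (hcb0 K))
      (fun K => ?_) hg
    exact mul_le_mul_of_nonneg_left (hcb1 K) (pow_nonneg (by linarith) K)
  have htend : Filter.Tendsto
      (fun K => ∑ k ∈ Finset.range K, p' * (1 - p') ^ k * seqConvPow f (k + 1) n)
      Filter.atTop (nhds (p n)) := by
    have : Filter.Tendsto (fun K => p n - (1 - p') ^ K * seqConv (seqConvPow f K) p n)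
        Filter.atTop (nhds (p n - 0)) := tendsto_const_nhds.sub h0
    rw [sub_zero] at this
    exact this.congr fun K => (hK K).symm
  have hhs : HasSum (fun k => p' * (1 - p') ^ k * seqConvPow f (k + 1) n) (p n) :=
    (hasSum_iff_tendsto_nat_of_nonneg hterm0 _).mpr htend
  exact hhs.tsum_eq.symm


lemma bnn_of_gid {p b : ℕ → ℝ} (hp : IsPMF p) (hp0 : 0 < p 0) (hb0 : b 0 = 0)
    (hA : PowerSeries.mk p * (1 - PowerSeries.mk b) = C (R := ℝ) (p 0))
    (hgid : GID p) : ∀ n, 0 ≤ b n := by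
  intro n
  match n with
  | 0 => rw [hb0]
  | (N + 1 : ℕ) =>
  set N' := N + 1 with hN'
  have hN1 : 1 ≤ N' := by omega
  by_contra hneg
  push_neg at hneg
  set C0 : ℝ := ∑ m ∈ Finset.Ico 2 (N' + 1), |seqConvPow b m N'| with hC0
  have hC00 : 0 ≤ C0 := Finset.sum_nonneg fun m _ => abs_nonneg _
  set ε : ℝ := -b N' / (2 * (C0 + 1)) with hε
  have hε0 : 0 < ε := div_pos (by linarith) (by linarith)
  set p' : ℝ := p 0 * ε / (1 + p 0 * ε) with hp'def
  have hpe : 0 < p 0 * ε := mul_pos hp0 hε0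
  have hp'0 : 0 < p' := div_pos hpe (by linarith)
  have hp'1 : p' < 1 := by rw [hp'def, div_lt_one (by linarith)]; linarith
  clear_value C0 ε p' 
  obtain ⟨f, hfPMF, hrep⟩ := hgid p' ⟨hp'0, hp'1⟩
  simp only [geomCompound] at hrep
  have hp01 : p 0 ≤ 1 := pmf_le_one hp 0
  -- summability of geometric-compound tails
  have hpow_le : ∀ k j, seqConvPow f k j ≤ 1 := fun k j =>
    pmf_le_one (isPMF_seqConvPow hfPMF k) j
  have hpow0 : ∀ k j, (0:ℝ) ≤ seqConvPow f k j := fun k j => seqConvPow_nonneg hfPMF.1 k j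
  have hgeo : Summable fun k : ℕ => p' * (1 - p') ^ k :=
    (summable_geometric_of_lt_one (by linarith) (by linarith)).mul_left p'
  have hSk : ∀ j, Summable fun k => p' * (1 - p') ^ k * seqConvPow f k j := by
    intro j
    refine Summable.of_nonneg_of_le
      (fun k => mul_nonneg (mul_nonneg hp'0.le (pow_nonneg (by linarith) k)) (hpow0 k j))
      (fun k => ?_) hgeo
    exact mul_le_of_le_one_right
      (mul_nonneg hp'0.le (pow_nonneg (by linarith) k)) (hpow_le k j)
  have hSk1 : ∀ j, Summable fun k => p' * (1 - p') ^ k * seqConvPow f (k + 1) j := by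
    intro j
    refine Summable.of_nonneg_of_le
      (fun k => mul_nonneg (mul_nonneg hp'0.le (pow_nonneg (by linarith) k)) (hpow0 _ j))
      (fun k => ?_) hgeo
    exact mul_le_of_le_one_right
      (mul_nonneg hp'0.le (pow_nonneg (by linarith) k)) (hpow_le _ j)
  -- the one-step relation
  have hS : ∀ j, (∑' k, p' * (1 - p') ^ k * seqConvPow f k j)
      = p' * (if j = 0 then 1 else 0) + (1 - p') * p j := by
    intro j
    rw [Summable.tsum_eq_zero_add (hSk j)]
    congr 1
    · show p' * (1 - p') ^ 0 * seqConvPow f 0 j = _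
      show p' * (1 - p') ^ 0 * (if j = 0 then (1:ℝ) else 0) = _
      ring
    · have heq : (fun k => p' * (1 - p') ^ (k + 1) * seqConvPow f (k + 1) j)
          = fun k => (1 - p') * (p' * (1 - p') ^ k * seqConvPow f (k + 1) j) := by
        funext k; ring
      rw [heq, tsum_mul_left, ← hrep j]
  have hrel : ∀ j, p j = p' * f j + (1 - p') * seqConv f p j := by
    intro j
    have h2 : ∀ k, p' * (1 - p') ^ k * seqConvPow f (k + 1) j
        = ∑ i ∈ Finset.range (j + 1), f i * (p' * (1 - p') ^ k * seqConvPow f k (j - i)) := by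
      intro k
      show p' * (1 - p') ^ k * seqConv f (seqConvPow f k) j = _
      show p' * (1 - p') ^ k * ∑ i ∈ Finset.range (j + 1), f i * seqConvPow f k (j - i) = _
      rw [Finset.mul_sum]
      exact Finset.sum_congr rfl fun i _ => by ring
    have h1 : p j = ∑ i ∈ Finset.range (j + 1),
        ∑' k, f i * (p' * (1 - p') ^ k * seqConvPow f k (j - i)) := by
      rw [hrep j, tsum_congr h2]
      exact Summable.tsum_finsetSum fun i _ => (hSk (j - i)).mul_left (f i)
    rw [h1]
    have h3 : ∀ i ∈ Finset.range (j + 1),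
        (∑' k, f i * (p' * (1 - p') ^ k * seqConvPow f k (j - i)))
        = f i * (p' * (if j - i = 0 then 1 else 0)) + (1 - p') * (f i * p (j - i)) := by
      intro i hi
      rw [tsum_mul_left, hS (j - i)]
      ring
    rw [Finset.sum_congr rfl h3, Finset.sum_add_distrib]
    congr 1
    · rw [Finset.sum_eq_single j]
      · simp [mul_comm]
      · intro i hi hij
        rw [Finset.mem_range] at hi
        rw [if_neg (by omega), mul_zero, mul_zero]
      · intro h; exact absurd (Finset.self_mem_range_succ j) h
    · show _ = (1 - p') * ∑ i ∈ Finset.range (j + 1), f i * p (j - i)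
      rw [Finset.mul_sum]
  -- power series version
  have hPSf4 : PowerSeries.mk p = C (R := ℝ) p' * PowerSeries.mk f
      + C (R := ℝ) (1 - p') * (PowerSeries.mk f * PowerSeries.mk p) := by
    ext j
    rw [coeff_mk, map_add, coeff_C_mul, coeff_C_mul, ← mk_seqConv, coeff_mk, coeff_mk]
    exact hrel j
  -- the explicit candidate
  set a : ℝ := p' + (1 - p') * p 0 with ha_def
  have ha0 : 0 < a := by
    have : 0 < (1 - p') * p 0 := mul_pos (by linarith) hp0
    linarith
  set t : ℝ := p' / a with ht_def
  set c : ℝ := p 0 / a with hc_def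
  have hFeq := gidF_Feq (p := p) (b := b) (p' := p') hb0 ha0.ne'
  have h4' := PS4 hb0 hA hFeq rfl ha0.ne'
  rw [← ht_def, ← hc_def] at h4'
  clear_value a t c
  -- uniqueness
  have hsub : (C (R := ℝ) p' + C (R := ℝ) (1 - p') * PowerSeries.mk p)
      * (PowerSeries.mk f - PowerSeries.mk (gidF b c t)) = 0 := by
    linear_combination h4' - hPSf4
  have hunit_ne : (C (R := ℝ) p' + C (R := ℝ) (1 - p') * PowerSeries.mk p) ≠ 0 := by
    intro h
    have h2 := congrArg (constantCoeff (R := ℝ)) h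
    rw [map_add, map_mul, constantCoeff_C, constantCoeff_C, map_zero] at h2
    have h3 : constantCoeff (R := ℝ) (PowerSeries.mk p) = p 0 := rfl
    rw [h3] at h2
    nlinarith
  have hff : PowerSeries.mk f = PowerSeries.mk (gidF b c t) := by
    rcases mul_eq_zero.mp hsub with h | h
    · exact absurd h hunit_ne
    · exact sub_eq_zero.mp h
  have hfn : f N' = gidF b c t N' := by
    have := congrArg (coeff (R := ℝ) N') hff
    rwa [coeff_mk, coeff_mk] at this
  -- numeric conclusion
  have hc0 : 0 < c := by rw [hc_def]; exact div_pos hp0 ha0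
  have ht0 : 0 < t := by rw [ht_def]; exact div_pos hp'0 ha0
  have ht1 : t ≤ 1 := by
    rw [ht_def, div_le_one ha0]
    nlinarith
  have hfN : 0 ≤ gidF b c t N' := hfn ▸ hfPMF.1 N'
  have hsplit : ∑ m ∈ Finset.range (N' + 1), t ^ m * seqConvPow b m N'
      = t * b N' + ∑ m ∈ Finset.Ico 2 (N' + 1), t ^ m * seqConvPow b m N' := by
    rw [Finset.range_eq_Ico,
      ← Finset.sum_Ico_consecutive _ (by omega : 0 ≤ 2) (by omega : 2 ≤ N' + 1)]
    congr 1
    have h02 : Finset.Ico 0 2 = Finset.range 2 := by rw [Finset.range_eq_Ico]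
    rw [h02, Finset.sum_range_succ, Finset.sum_range_one, seqConvPow_one]
    have hz : seqConvPow b 0 N' = 0 := by
      show (if N' = 0 then (1:ℝ) else 0) = 0
      rw [if_neg (by omega)]
    rw [hz, pow_one]
    ring
  have hS_ub : ∑ m ∈ Finset.Ico 2 (N' + 1), t ^ m * seqConvPow b m N' ≤ t ^ 2 * C0 := by
    rw [hC0, Finset.mul_sum]
    refine Finset.sum_le_sum fun m hm => ?_
    have hm2 : 2 ≤ m := (Finset.mem_Ico.mp hm).1
    have h1 : t ^ m ≤ t ^ 2 := pow_le_pow_of_le_one ht0.le ht1 hm2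
    calc t ^ m * seqConvPow b m N' ≤ t ^ m * |seqConvPow b m N'| :=
          mul_le_mul_of_nonneg_left (le_abs_self _) (pow_nonneg ht0.le m)
      _ ≤ t ^ 2 * |seqConvPow b m N'| :=
          mul_le_mul_of_nonneg_right h1 (abs_nonneg _)
  have hkey : 0 ≤ t * b N' + t ^ 2 * C0 := by
    have h5 : 0 ≤ t * b N' + ∑ m ∈ Finset.Ico 2 (N' + 1), t ^ m * seqConvPow b m N' := by
      have := hfN
      rw [show gidF b c t N' = c * ∑ m ∈ Finset.range (N' + 1), t ^ m * seqConvPow b m N'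
        from rfl, hsplit] at this
      nlinarith
    nlinarith
  have hbN : -(t * C0) ≤ b N' := by nlinarith
  have hta : t ≤ ε := by
    rw [ht_def, div_le_iff₀ ha0]
    have hq : (1:ℝ) + p 0 * ε ≠ 0 := by linarith
    have h1 : ε * ((1 - p') * p 0) = p' := by
      rw [hp'def]
      field_simp
      ring
    have h2 : ε * (p' + (1 - p') * p 0) = ε * p' + p' := by rw [mul_add, h1]
    rw [ha_def, h2]
    have := mul_pos hε0 hp'0
    linarith
  have hfin : -(ε * (C0 + 1)) = b N' / 2 := by
    have hq2 : C0 + 1 ≠ 0 := by linarith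
    rw [hε]
    field_simp
  have : b N' / 2 ≤ b N' := by
    calc b N' / 2 = -(ε * (C0 + 1)) := hfin.symm
      _ ≤ -(ε * C0) := by
          have h7 : ε * C0 ≤ ε * (C0 + 1) :=
            mul_le_mul_of_nonneg_left (by linarith) hε0.le
          linarith
      _ ≤ -(t * C0) := by
          have h8 : t * C0 ≤ ε * C0 := mul_le_mul_of_nonneg_right hta hC00
          linarith
      _ ≤ b N' := hbN
  linarith


end Stmt16

/-- An i.d. distribution (p_n) on ℕ with Lévy measure (r_n) is g.i.d.
iff the sequence (b_n) with b₀ = 0 and `(n+1)b_{n+1} = r_n - Σ_{k=1}^n b_k r_{n-k}`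
is nonnegative; in that case Σ b_n < 1. -/
theorem stmt16 (p r : ℕ → ℝ) (hp : IsPMF p) (hr : ∀ n, 0 ≤ r n)
    (hid : ∀ n : ℕ, ((n : ℝ) + 1) * p (n + 1) = ∑ k ∈ Finset.range (n + 1), r k * p (n - k))
    (b : ℕ → ℝ) (hb0 : b 0 = 0)
    (hb : ∀ n : ℕ, ((n : ℝ) + 1) * b (n + 1) = r n - ∑ k ∈ Finset.Icc 1 n, b k * r (n - k)) :
    (GID p ↔ ∀ n, 0 ≤ b n) ∧ (GID p → Summable b ∧ ∑' n, b n < 1) := by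
  classical
  have hp0 : 0 < p 0 := Stmt16.p0_pos hp hid
  have hA : PowerSeries.mk p * (1 - PowerSeries.mk b) = PowerSeries.C (R := ℝ) (p 0) :=
    Stmt16.lemA_PS p r b hb0 hid hb
  have hAc : ∀ n, p n = (if n = 0 then p 0 else 0) + seqConv b p n :=
    Stmt16.lemA_coeff hA
  have hdir2 : GID p → ∀ n, 0 ≤ b n := fun hg => Stmt16.bnn_of_gid hp hp0 hb0 hA hg
  have hdir1 : (∀ n, 0 ≤ b n) → GID p := by
    intro hbnn
    obtain ⟨hSb, htb⟩ := Stmt16.b_facts hp hp0 hbnn hb0 hAc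
    exact Stmt16.gid_of_bnn hp hp0 hb0 hbnn hA hSb htb
  refine ⟨⟨hdir2, hdir1⟩, fun hg => ?_⟩
  have hbnn := hdir2 hg
  obtain ⟨hSb, htb⟩ := Stmt16.b_facts hp hp0 hbnn hb0 hAc
  exact ⟨hSb, by rw [htb]; linarith⟩
end
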